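/- arXiv:2403.20192 — 3 statements merged into one kernel-verified Lean document; each statement's English description precedes it below -/
import Mathlib

section
/- There exist universal constants c_1, c_2 > 0 such that the following holds. Let n ≥ 1, let X^{(1)},…,X^{(ℓ)} ∈ ℝ^n be independent isotropic log-concave random vectors each admitting the Poincaré constant C_P > 0, and suppose C_P ≤ √n and ℓ < 2√n / C_P. Then for every t > 0: P( ∏_{j=1}^ℓ ‖X^{(j)}‖_2 ≥ (1+t) n^{ℓ/2} ) ≤ exp( − min( c_1 n (log(1+t))² / (C_P² ℓ) , c_2 √n log(1+t) / C_P ) ). -/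
open MeasureTheory ProbabilityTheory Real

/-- A random vector is log-concave: it has a log-concave probability density
w.r.t. Lebesgue measure. -/
def IsLogConcaveRV {Ω : Type*} [MeasurableSpace Ω] (μ : Measure Ω)
    {n : ℕ} (X : Ω → EuclideanSpace ℝ (Fin n)) : Prop :=
  ∃ f : EuclideanSpace ℝ (Fin n) → ℝ,
    (∀ x, 0 ≤ f x) ∧
    Measure.map X μ = volume.withDensity (fun x => ENNReal.ofReal (f x)) ∧
    ∀ x y : EuclideanSpace ℝ (Fin n), ∀ θ : ℝ, 0 < θ → θ < 1 →
      f x ^ θ * f y ^ (1 - θ) ≤ f (θ • x + (1 - θ) • y)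

/-- A random vector is isotropic: centered coordinates, unit variances, pairwise
uncorrelated (`E[XXᵀ] = Id`). -/
def IsIsotropicRV {Ω : Type*} [MeasurableSpace Ω] (μ : Measure Ω)
    {n : ℕ} (X : Ω → EuclideanSpace ℝ (Fin n)) : Prop :=
  (∀ i, ∫ ω, X ω i ∂μ = 0) ∧
  (∀ i k, ∫ ω, X ω i * X ω k ∂μ = if i = k then 1 else 0)

/-- `CP` is a Poincaré constant for the random vector `X`:
`Var(f(X)) ≤ CP ⬝ E‖∇f(X)‖²` for every `C¹` function `f`. -/
def IsPoincareConst {Ω : Type*} [MeasurableSpace Ω] (μ : Measure Ω)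
    {n : ℕ} (X : Ω → EuclideanSpace ℝ (Fin n)) (CP : ℝ) : Prop :=
  ∀ f : EuclideanSpace ℝ (Fin n) → ℝ, ContDiff ℝ 1 f →
    ProbabilityTheory.variance (fun ω => f (X ω)) μ ≤ CP * ∫ ω, ‖gradient f (X ω)‖ ^ 2 ∂μ

set_option maxHeartbeats 1000000
set_option synthInstance.maxHeartbeats 400000
set_option linter.unusedVariables false
set_option linter.unusedSectionVars false


noncomputable def sphi (δ R y : ℝ) : ℝ := y - δ * Real.log (1 + Real.exp ((y - R)/δ))

lemma sphi_le_self (δ R y : ℝ) (hδ : 0 < δ) : sphi δ R y ≤ y := by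
  have h1 : (0:ℝ) ≤ Real.log (1 + Real.exp ((y - R)/δ)) := by
    apply Real.log_nonneg; nlinarith [Real.exp_pos ((y - R)/δ)]
  unfold sphi; nlinarith

lemma sphi_le_R (δ R y : ℝ) (hδ : 0 < δ) : sphi δ R y ≤ R := by
  have h1 : (y - R)/δ ≤ Real.log (1 + Real.exp ((y - R)/δ)) := by
    calc (y-R)/δ = Real.log (Real.exp ((y-R)/δ)) := (Real.log_exp _).symm
    _ ≤ _ := by
      apply Real.log_le_log (Real.exp_pos _); nlinarith [Real.exp_pos ((y - R)/δ)]
  unfold sphi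
  have := mul_le_mul_of_nonneg_left h1 hδ.le
  have hd : δ * ((y-R)/δ) = y - R := by field_simp
  nlinarith

lemma min_le_sphi (δ R y : ℝ) (hδ : 0 < δ) : min y R - δ ≤ sphi δ R y := by
  have h2 : Real.log (1 + Real.exp ((y - R)/δ)) ≤ Real.log 2 + max ((y-R)/δ) 0 := by
    have hb : 1 + Real.exp ((y - R)/δ) ≤ 2 * Real.exp (max ((y-R)/δ) 0) := by
      have h1 : Real.exp ((y-R)/δ) ≤ Real.exp (max ((y-R)/δ) 0) :=
        Real.exp_le_exp.2 (le_max_left _ _)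
      have h0 : (1:ℝ) ≤ Real.exp (max ((y-R)/δ) 0) := by
        rw [show (1:ℝ) = Real.exp 0 by simp]; exact Real.exp_le_exp.2 (le_max_right _ _)
      nlinarith
    calc Real.log (1 + Real.exp ((y - R)/δ)) ≤ Real.log (2 * Real.exp (max ((y-R)/δ) 0)) := by
          apply Real.log_le_log (by positivity) hb
      _ = Real.log 2 + max ((y-R)/δ) 0 := by rw [Real.log_mul (by norm_num) (by positivity), Real.log_exp]
  have hlog2 : Real.log 2 ≤ 1 := by
    calc Real.log 2 ≤ 2 - 1 := Real.log_le_sub_one_of_pos (by norm_num)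
    _ = 1 := by norm_num
  have hmul := mul_le_mul_of_nonneg_left h2 hδ.le
  have hmax : δ * max ((y-R)/δ) 0 = max (y-R) 0 := by
    rw [mul_max_of_nonneg _ _ hδ.le]
    congr 1
    · field_simp
    · simp
  unfold sphi
  rcases le_total y R with h | h
  · simp only [min_eq_left h]
    have : max (y - R) 0 = 0 := max_eq_right (by linarith)
    nlinarith
  · simp only [min_eq_right h]
    have : max (y - R) 0 = y - R := max_eq_left (by linarith)
    nlinarith

lemma abs_sphi_le (δ R y : ℝ) (hδ : 0 < δ) (hR : 0 ≤ R) (hy : 0 ≤ y) : |sphi δ R y| ≤ R + δ := by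
  rw [abs_le]
  constructor
  · have := min_le_sphi δ R y hδ
    have : (0:ℝ) ≤ min y R := le_min hy hR
    nlinarith [min_le_sphi δ R y hδ]
  · linarith [sphi_le_R δ R y hδ]

lemma sphi_hasDerivAt (δ R y : ℝ) (hδ : 0 < δ) :
    HasDerivAt (sphi δ R) (1 - Real.exp ((y - R)/δ) / (1 + Real.exp ((y - R)/δ))) y := by
  have hpos : (0:ℝ) < 1 + Real.exp ((y - R)/δ) := by positivity
  have h1 : HasDerivAt (fun y => (y - R)/δ) (1/δ) y := by
    simpa using ((hasDerivAt_id y).sub_const R).div_const δ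
  have h2 : HasDerivAt (fun y => 1 + Real.exp ((y - R)/δ)) (Real.exp ((y-R)/δ) * (1/δ)) y :=
    (h1.exp).const_add 1
  have h3 : HasDerivAt (fun y => Real.log (1 + Real.exp ((y - R)/δ)))
      (Real.exp ((y-R)/δ) * (1/δ) / (1 + Real.exp ((y - R)/δ))) y := h2.log (ne_of_gt hpos)
  have h4 := ((hasDerivAt_id y).sub (h3.const_mul δ))
  refine h4.congr_deriv ?_
  field_simp

lemma sphi_deriv_nonneg (δ R y : ℝ) : 0 ≤ 1 - Real.exp ((y - R)/δ) / (1 + Real.exp ((y - R)/δ)) := by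
  have h := Real.exp_pos ((y - R)/δ)
  have : Real.exp ((y - R)/δ) / (1 + Real.exp ((y - R)/δ)) ≤ 1 := by
    rw [div_le_one (by positivity)]; linarith
  linarith

lemma sphi_deriv_le_one (δ R y : ℝ) : 1 - Real.exp ((y - R)/δ) / (1 + Real.exp ((y - R)/δ)) ≤ 1 := by
  have h := Real.exp_pos ((y - R)/δ)
  have : 0 ≤ Real.exp ((y - R)/δ) / (1 + Real.exp ((y - R)/δ)) := by positivity
  linarith

lemma sphi_contDiff (δ R : ℝ) (hδ : 0 < δ) : ContDiff ℝ 1 (sphi δ R) := by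
  unfold sphi
  apply ContDiff.sub contDiff_id
  apply ContDiff.mul contDiff_const
  apply ContDiff.log
  · exact ContDiff.add contDiff_const (Real.contDiff_exp.comp ((contDiff_id.sub contDiff_const).div_const δ))
  · intro y; positivity




variable {n : ℕ}

noncomputable def gtest (ε δ R c : ℝ) (x : EuclideanSpace ℝ (Fin n)) : ℝ :=
  Real.exp (c * sphi δ R (Real.sqrt (‖x‖^2 + ε^2)))

lemma gtest_contDiff (ε δ R c : ℝ) (hε : 0 < ε) (hδ : 0 < δ) :
    ContDiff ℝ 1 (gtest ε δ R c (n := n)) := by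
  unfold gtest
  apply Real.contDiff_exp.comp
  apply ContDiff.mul contDiff_const
  apply (sphi_contDiff δ R hδ).comp
  apply ContDiff.sqrt
  · exact (contDiff_norm_sq ℝ).add contDiff_const
  · intro x; positivity

lemma gtest_hasFDerivAt (ε δ R c : ℝ) (hε : 0 < ε) (hδ : 0 < δ) (x : EuclideanSpace ℝ (Fin n)) :
    HasFDerivAt (gtest ε δ R c)
      ((gtest ε δ R c x * (c * ((1 - Real.exp ((Real.sqrt (‖x‖^2 + ε^2) - R)/δ) /
          (1 + Real.exp ((Real.sqrt (‖x‖^2 + ε^2) - R)/δ))) *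
        (1 / (2 * Real.sqrt (‖x‖^2 + ε^2)))))) • (2 • (innerSL ℝ x))) x := by
  have hq : (0:ℝ) < ‖x‖^2 + ε^2 := by positivity
  have hw : HasFDerivAt (fun x : EuclideanSpace ℝ (Fin n) => ‖x‖^2 + ε^2)
      (2 • (innerSL ℝ x)) x := ((hasFDerivAt_id x).norm_sq).add_const (ε^2)
  have hsq : HasDerivAt Real.sqrt (1 / (2 * Real.sqrt (‖x‖^2 + ε^2))) (‖x‖^2 + ε^2) :=
    Real.hasDerivAt_sqrt (ne_of_gt hq)
  have hφ := sphi_hasDerivAt δ R (Real.sqrt (‖x‖^2 + ε^2)) hδ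
  have hcomp1 : HasDerivAt (fun q => sphi δ R (Real.sqrt q))
      ((1 - Real.exp ((Real.sqrt (‖x‖^2 + ε^2) - R)/δ) /
          (1 + Real.exp ((Real.sqrt (‖x‖^2 + ε^2) - R)/δ))) *
        (1 / (2 * Real.sqrt (‖x‖^2 + ε^2)))) (‖x‖^2 + ε^2) := hφ.comp _ hsq
  have hcomp2 : HasDerivAt (fun q => Real.exp (c * sphi δ R (Real.sqrt q)))
      (Real.exp (c * sphi δ R (Real.sqrt (‖x‖^2 + ε^2))) *
        (c * ((1 - Real.exp ((Real.sqrt (‖x‖^2 + ε^2) - R)/δ) /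
          (1 + Real.exp ((Real.sqrt (‖x‖^2 + ε^2) - R)/δ))) *
        (1 / (2 * Real.sqrt (‖x‖^2 + ε^2)))))) (‖x‖^2 + ε^2) :=
    (hcomp1.const_mul c).exp
  have h := hcomp2.comp_hasFDerivAt x hw
  exact h

lemma gtest_grad_norm_le (ε δ R c : ℝ) (hε : 0 < ε) (hδ : 0 < δ) (hc : 0 ≤ c)
    (x : EuclideanSpace ℝ (Fin n)) :
    ‖gradient (gtest ε δ R c) x‖ ≤ c * gtest ε δ R c x := by
  have hF := gtest_hasFDerivAt ε δ R c hε hδ (n := n) x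
  have hgrad : gradient (gtest ε δ R c) x =
      (InnerProductSpace.toDual ℝ _).symm (fderiv ℝ (gtest ε δ R c) x) := rfl
  rw [hgrad, LinearIsometryEquiv.norm_map, hF.fderiv]
  set q := Real.sqrt (‖x‖^2 + ε^2) with hqdef
  set d := 1 - Real.exp ((q - R)/δ) / (1 + Real.exp ((q - R)/δ)) with hd
  have hd0 : 0 ≤ d := sphi_deriv_nonneg _ _ _
  have hd1 : d ≤ 1 := sphi_deriv_le_one _ _ _
  have hg0 : 0 < gtest ε δ R c x := Real.exp_pos _
  have hs : 0 < q := Real.sqrt_pos.2 (by positivity)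
  have hxq : ‖x‖ ≤ q := by
    rw [hqdef]
    calc ‖x‖ = Real.sqrt (‖x‖^2) := by rw [Real.sqrt_sq (norm_nonneg _)]
    _ ≤ _ := Real.sqrt_le_sqrt (by nlinarith)
  apply ContinuousLinearMap.opNorm_le_bound _ (by positivity)
  intro y
  have hxy : |(inner ℝ x y : ℝ)| ≤ ‖x‖ * ‖y‖ := abs_real_inner_le_norm x y
  have happ : (((gtest ε δ R c x * (c * (d * (1 / (2 * q))))) • (2 • (innerSL ℝ x))) y : ℝ)
      = (gtest ε δ R c x * (c * (d * (1 / (2 * q))))) * (2 * (inner ℝ x y : ℝ)) := by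
    simp [two_smul]; ring
  rw [happ, Real.norm_eq_abs]
  rw [abs_mul, abs_of_nonneg (by positivity), abs_mul, abs_of_nonneg (by norm_num : (0:ℝ) ≤ 2)]
  have h1 : |(inner ℝ x y : ℝ)| ≤ q * ‖y‖ := le_trans hxy (by nlinarith [norm_nonneg y])
  have h2 : gtest ε δ R c x * (c * (d * (1 / (2 * q)))) * (2 * |(inner ℝ x y : ℝ)|)
      ≤ gtest ε δ R c x * (c * (d * (1 / (2 * q)))) * (2 * (q * ‖y‖)) := by
    apply mul_le_mul_of_nonneg_left (by linarith) (by positivity)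
  calc gtest ε δ R c x * (c * (d * (1 / (2 * q)))) * (2 * |(inner ℝ x y : ℝ)|)
      ≤ gtest ε δ R c x * (c * (d * (1 / (2 * q)))) * (2 * (q * ‖y‖)) := h2
    _ = c * gtest ε δ R c x * d * ‖y‖ := by field_simp
    _ ≤ c * gtest ε δ R c x * 1 * ‖y‖ := by
        apply mul_le_mul_of_nonneg_right _ (norm_nonneg _)
        apply mul_le_mul_of_nonneg_left hd1 (by positivity)
    _ = c * gtest ε δ R c x * ‖y‖ := by ring

lemma gtest_meas' {n : ℕ} (ε δ R : ℝ) (hε : 0 < ε) (hδ : 0 < δ) (c : ℝ) :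
    Measurable (gtest (n := n) ε δ R c) :=
  (gtest_contDiff ε δ R c hε hδ).continuous.measurable





section MGF
variable {Ω : Type} [MeasureSpace Ω] [IsProbabilityMeasure (ℙ : Measure Ω)]
  {n : ℕ} {X : Ω → EuclideanSpace ℝ (Fin n)} {CP ε δ R : ℝ}

lemma exp_le_quadratic {x : ℝ} (hx : |x| ≤ 1) : Real.exp x ≤ 1 + x + x^2 := by
  have h := Real.exp_bound hx (n := 2) (by norm_num)
  have hsum : ∑ m ∈ Finset.range 2, x ^ m / m.factorial = 1 + x := by
    simp [Finset.sum_range_succ]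
  rw [hsum, sq_abs] at h
  norm_num [Nat.factorial] at h
  have := (abs_sub_le_iff.1 h).1
  nlinarith [sq_nonneg x]

lemma gtest_meas (hX : Measurable X) (hε : 0 < ε) (hδ : 0 < δ) (c : ℝ) :
    Measurable (fun ω => gtest ε δ R c (X ω)) :=
  ((gtest_contDiff ε δ R c hε hδ).continuous.measurable).comp hX

lemma gtest_pos (c : ℝ) (x : EuclideanSpace ℝ (Fin n)) : 0 < gtest ε δ R c x := Real.exp_pos _

lemma gtest_le_bound (hε : 0 < ε) (hδ : 0 < δ) (hR : 0 ≤ R) {c : ℝ} (hc : 0 ≤ c)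
    (x : EuclideanSpace ℝ (Fin n)) : gtest ε δ R c x ≤ Real.exp (c * R) := by
  unfold gtest
  exact Real.exp_le_exp.2 (mul_le_mul_of_nonneg_left (sphi_le_R δ R _ hδ) hc)

lemma gtest_memℒp (hX : Measurable X) (hε : 0 < ε) (hδ : 0 < δ) (hR : 0 ≤ R) {c : ℝ} (hc : 0 ≤ c)
    (p : ENNReal) : MemLp (fun ω => gtest ε δ R c (X ω)) p ℙ := by
  apply MemLp.of_bound ((gtest_meas hX hε hδ c).aestronglyMeasurable) (Real.exp (c * R))
  filter_upwards with ω
  rw [Real.norm_eq_abs, abs_of_pos (gtest_pos _ _)]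
  exact gtest_le_bound hε hδ hR hc _

lemma gtest_integrable (hX : Measurable X) (hε : 0 < ε) (hδ : 0 < δ) (hR : 0 ≤ R) {c : ℝ}
    (hc : 0 ≤ c) : Integrable (fun ω => gtest ε δ R c (X ω)) ℙ :=
  memLp_one_iff_integrable.1 (gtest_memℒp hX hε hδ hR hc 1)

lemma gtest_sq (c : ℝ) (x : EuclideanSpace ℝ (Fin n)) :
    gtest ε δ R c x ^ 2 = gtest ε δ R (2*c) x := by
  unfold gtest
  rw [← Real.exp_nat_mul]
  norm_num
  ring_nf

/-- one step of the Aida–Stroock iteration -/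
lemma poincare_step (hX : Measurable X) (hP : IsPoincareConst ℙ X CP) (hCP : 0 < CP)
    (hε : 0 < ε) (hδ : 0 < δ) (hR : 0 ≤ R) {s : ℝ} (hs : 0 < s) (hu : CP * s^2 ≤ 1) :
    ∫ ω, gtest ε δ R s (X ω) ∂ℙ ≤
      Real.exp (CP * s^2 / 2) * (∫ ω, gtest ε δ R (s/2) (X ω) ∂ℙ)^2 := by
  have hc2 : 0 ≤ s/2 := by linarith
  have hvar := hP (gtest ε δ R (s/2)) (gtest_contDiff ε δ R (s/2) hε hδ)
  rw [variance_eq_sub (gtest_memℒp hX hε hδ hR hc2 2)] at hvar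
  -- rewrite (g)^2 under the integral
  have hpow : (fun ω => gtest ε δ R (s/2) (X ω)) ^ 2 = fun ω => gtest ε δ R s (X ω) := by
    funext ω
    rw [Pi.pow_apply, gtest_sq, show 2*(s/2) = s by ring]
  rw [hpow] at hvar
  -- bound the gradient integral
  have hgradle : ∫ ω, ‖gradient (gtest ε δ R (s/2)) (X ω)‖ ^ 2 ∂ℙ ≤
      (s/2)^2 * ∫ ω, gtest ε δ R s (X ω) ∂ℙ := by
    rw [← integral_const_mul]
    apply integral_mono_of_nonneg
    · filter_upwards with ω; positivity
    · exact (gtest_integrable hX hε hδ hR (by linarith : (0:ℝ) ≤ s)).const_mul _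
    · filter_upwards with ω
      have h1 := gtest_grad_norm_le ε δ R (s/2) hε hδ hc2 (X ω)
      have h2 : ‖gradient (gtest ε δ R (s/2)) (X ω)‖ ^ 2 ≤ ((s/2) * gtest ε δ R (s/2) (X ω))^2 := by
        apply sq_le_sq' _ h1
        have := norm_nonneg (gradient (gtest ε δ R (s/2)) (X ω))
        have := gtest_pos (ε := ε) (δ := δ) (R := R) (s/2) (X ω)
        nlinarith
      calc ‖gradient (gtest ε δ R (s/2)) (X ω)‖ ^ 2
          ≤ ((s/2) * gtest ε δ R (s/2) (X ω))^2 := h2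
        _ = (s/2)^2 * gtest ε δ R s (X ω) := by
            rw [mul_pow, gtest_sq, show 2*(s/2) = s by ring]
  set F := ∫ ω, gtest ε δ R s (X ω) ∂ℙ with hF
  set G := ∫ ω, gtest ε δ R (s/2) (X ω) ∂ℙ with hG
  have hkey : F - G^2 ≤ CP * ((s/2)^2 * F) := le_trans hvar (by
    apply mul_le_mul_of_nonneg_left hgradle hCP.le)
  have hFnn : 0 ≤ F := integral_nonneg fun ω => (gtest_pos _ _).le
  set x := CP * s^2 / 4 with hx
  have hx0 : 0 ≤ x := by positivity
  have hx1 : x ≤ 1/4 := by rw [hx]; linarith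
  have h1 : F * (1 - x) ≤ G^2 := by
    have : CP * ((s/2)^2 * F) = x * F := by rw [hx]; ring
    rw [this] at hkey; nlinarith
  have hexp : 1 ≤ (1 - x) * Real.exp (2 * x) := by
    have := Real.add_one_le_exp (2*x)
    nlinarith
  have h2 : Real.exp (CP * s^2/2) = Real.exp (2 * x) := by rw [hx]; ring_nf
  rw [h2]
  have hG2 : 0 ≤ G^2 := sq_nonneg G
  nlinarith [Real.exp_pos (2*x)]


lemma sqrt_meas (hX : Measurable X) (ε : ℝ) :
    Measurable (fun ω => Real.sqrt (‖X ω‖^2 + ε^2)) :=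
  Real.continuous_sqrt.measurable.comp ((hX.norm.pow_const 2).add_const (ε^2))

lemma sphi_comp_integrable (hX : Measurable X) (hε : 0 < ε) (hδ : 0 < δ) (hR : 0 ≤ R) :
    Integrable (fun ω => sphi δ R (Real.sqrt (‖X ω‖^2 + ε^2))) ℙ := by
  apply memLp_one_iff_integrable.1
  apply MemLp.of_bound
    (((sphi_contDiff δ R hδ).continuous.measurable.comp (sqrt_meas hX ε)).aestronglyMeasurable)
    (R + δ)
  filter_upwards with ω
  rw [Real.norm_eq_abs]
  exact abs_sphi_le δ R _ hδ hR (Real.sqrt_nonneg _)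

lemma poincare_iter (hX : Measurable X) (hP : IsPoincareConst ℙ X CP) (hCP : 0 < CP)
    (hε : 0 < ε) (hδ : 0 < δ) (hR : 0 ≤ R) {lam : ℝ} (hlam : 0 < lam) (hu : CP * lam^2 ≤ 1)
    (k : ℕ) :
    ∫ ω, gtest ε δ R lam (X ω) ∂ℙ ≤
      Real.exp (CP * lam^2 * (1 - (1/2)^k)) *
        (∫ ω, gtest ε δ R (lam/2^k) (X ω) ∂ℙ)^(2^k) := by
  induction k with
  | zero => simp
  | succ k ih =>
    set s := lam / 2^k with hsdef
    have h2k : (0:ℝ) < 2^k := by positivity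
    have hs : 0 < s := by positivity
    have hsle : s ≤ lam := by
      rw [hsdef]
      exact div_le_self hlam.le (one_le_pow₀ (by norm_num))
    have hs2 : s^2 ≤ lam^2 := pow_le_pow_left₀ hs.le hsle 2
    have hu' : CP * s^2 ≤ 1 := le_trans (by nlinarith) hu
    have hstep := poincare_step hX hP hCP hε hδ hR hs hu'
    have hFnn : 0 ≤ ∫ ω, gtest ε δ R s (X ω) ∂ℙ := integral_nonneg fun ω => (gtest_pos _ _).le
    have hpow := pow_le_pow_left₀ hFnn hstep (2^k)
    have hhalf : s / 2 = lam / 2^(k+1) := by rw [hsdef, pow_succ]; ring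
    rw [hhalf] at hpow
    have hFnn2 : 0 ≤ ∫ ω, gtest ε δ R (lam/2^(k+1)) (X ω) ∂ℙ :=
      integral_nonneg fun ω => (gtest_pos _ _).le
    calc ∫ ω, gtest ε δ R lam (X ω) ∂ℙ
        ≤ Real.exp (CP * lam^2 * (1 - (1/2)^k)) * (∫ ω, gtest ε δ R s (X ω) ∂ℙ)^(2^k) := ih
      _ ≤ Real.exp (CP * lam^2 * (1 - (1/2)^k)) *
          ((Real.exp (CP * s^2 / 2) * (∫ ω, gtest ε δ R (lam/2^(k+1)) (X ω) ∂ℙ)^2)^(2^k)) := by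
          apply mul_le_mul_of_nonneg_left hpow (Real.exp_pos _).le
      _ = Real.exp (CP * lam^2 * (1 - (1/2)^(k+1))) *
          (∫ ω, gtest ε δ R (lam/2^(k+1)) (X ω) ∂ℙ)^(2^(k+1)) := by
          rw [mul_pow, ← Real.exp_nat_mul, ← pow_mul, ← mul_assoc, ← Real.exp_add,
            show 2*2^k = 2^(k+1) from (pow_succ' 2 k).symm]
          congr 1
          push_cast
          rw [hsdef]
          simp only [one_div, inv_pow]
          field_simp
          ring

lemma F_small (hX : Measurable X) (hε : 0 < ε) (hδ : 0 < δ) (hR : 0 ≤ R) {m : ℝ}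
    (hmi : Integrable (fun ω => Real.sqrt (‖X ω‖^2 + ε^2)) ℙ)
    (hm : ∫ ω, Real.sqrt (‖X ω‖^2 + ε^2) ∂ℙ ≤ m)
    {s : ℝ} (hs : 0 < s) (hsm : s * (R + δ) ≤ 1) :
    ∫ ω, gtest ε δ R s (X ω) ∂ℙ ≤ Real.exp (s * m + s^2 * (R + δ)^2) := by
  have hRδ : 0 < R + δ := by linarith
  have hptwise : ∀ ω, gtest ε δ R s (X ω) ≤
      1 + s * sphi δ R (Real.sqrt (‖X ω‖^2 + ε^2)) + s^2 * (R + δ)^2 := by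
    intro ω
    set y := Real.sqrt (‖X ω‖^2 + ε^2) with hy
    have habs : |sphi δ R y| ≤ R + δ := abs_sphi_le δ R y hδ hR (Real.sqrt_nonneg _)
    have habs2 : |s * sphi δ R y| ≤ s * (R + δ) := by
      rw [abs_mul, abs_of_pos hs]
      exact mul_le_mul_of_nonneg_left habs hs.le
    have h1 : |s * sphi δ R y| ≤ 1 := le_trans habs2 hsm
    have h2 := exp_le_quadratic h1
    have h3 : (s * sphi δ R y)^2 ≤ s^2 * (R + δ)^2 := by
      rw [← sq_abs, ← mul_pow]
      exact pow_le_pow_left₀ (abs_nonneg _) habs2 2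
    calc gtest ε δ R s (X ω) = Real.exp (s * sphi δ R y) := rfl
      _ ≤ 1 + s * sphi δ R y + (s * sphi δ R y)^2 := h2
      _ ≤ 1 + s * sphi δ R y + s^2 * (R + δ)^2 := by linarith
  have hφint := sphi_comp_integrable hX hε hδ hR
  have hφle : ∫ ω, sphi δ R (Real.sqrt (‖X ω‖^2 + ε^2)) ∂ℙ ≤ m := by
    refine le_trans (integral_mono hφint hmi fun ω => ?_) hm
    exact sphi_le_self δ R _ hδ
  have hint1 : Integrable (fun ω => 1 + s * sphi δ R (Real.sqrt (‖X ω‖^2 + ε^2))) ℙ :=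
    (integrable_const (1:ℝ)).add (hφint.const_mul s)
  have hint2 : Integrable (fun ω => 1 + s * sphi δ R (Real.sqrt (‖X ω‖^2 + ε^2))
      + s^2 * (R + δ)^2) ℙ := hint1.add (integrable_const _)
  calc ∫ ω, gtest ε δ R s (X ω) ∂ℙ
      ≤ ∫ ω, (1 + s * sphi δ R (Real.sqrt (‖X ω‖^2 + ε^2)) + s^2 * (R + δ)^2) ∂ℙ := by
        apply integral_mono (gtest_integrable hX hε hδ hR hs.le) hint2
        exact fun ω => hptwise ω
    _ = 1 + s * (∫ ω, sphi δ R (Real.sqrt (‖X ω‖^2 + ε^2)) ∂ℙ) + s^2 * (R + δ)^2 := by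
        rw [integral_add hint1 (integrable_const _),
          integral_add (integrable_const (1:ℝ)) (hφint.const_mul s), integral_const,
          integral_const_mul, integral_const]
        simp
    _ ≤ 1 + s * m + s^2 * (R + δ)^2 := by nlinarith
    _ ≤ Real.exp (s * m + s^2 * (R + δ)^2) := by
        have := Real.add_one_le_exp (s * m + s^2 * (R + δ)^2)
        linarith

lemma mgf_bound (hX : Measurable X) (hP : IsPoincareConst ℙ X CP) (hCP : 0 < CP)
    (hε : 0 < ε) (hδ : 0 < δ) (hR : 0 ≤ R) {lam m : ℝ}
    (hmi : Integrable (fun ω => Real.sqrt (‖X ω‖^2 + ε^2)) ℙ)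
    (hm : ∫ ω, Real.sqrt (‖X ω‖^2 + ε^2) ∂ℙ ≤ m)
    (hlam : 0 < lam) (hu : CP * lam^2 ≤ 1) :
    ∫ ω, gtest ε δ R lam (X ω) ∂ℙ ≤ Real.exp (lam * m + CP * lam^2) := by
  have hRδ : 0 < R + δ := by linarith
  have hm0 : 0 ≤ m := le_trans (integral_nonneg fun ω => Real.sqrt_nonneg _) hm
  -- the sequence of upper bounds
  set a : ℕ → ℝ := fun k => Real.exp (lam * m + CP * lam^2 + lam^2 * (R+δ)^2 * (1/2)^k) with ha
  have hbound : ∀ᶠ k in Filter.atTop, ∫ ω, gtest ε δ R lam (X ω) ∂ℙ ≤ a k := by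
    have htend : Filter.Tendsto (fun k : ℕ => lam * (R+δ) * (1/2)^k) Filter.atTop (nhds 0) := by
      have := tendsto_pow_atTop_nhds_zero_of_lt_one (by norm_num : (0:ℝ) ≤ 1/2) (by norm_num)
      simpa using this.const_mul (lam * (R+δ))
    have hev : ∀ᶠ k in Filter.atTop, lam * (R+δ) * (1/2)^k ≤ 1 := by
      filter_upwards [htend.eventually (eventually_le_nhds (by norm_num : (0:ℝ) < 1))]
        with k hk using hk
    filter_upwards [hev] with k hk
    set s := lam / 2^k with hs
    have h2k : (0:ℝ) < 2^k := by positivity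
    have hspos : 0 < s := by positivity
    have hsm : s * (R + δ) ≤ 1 := by
      have : s * (R+δ) = lam * (R+δ) * (1/2)^k := by rw [hs]; simp only [one_div, inv_pow]; field_simp
      rw [this]; exact hk
    have hsmall := F_small hX hε hδ hR hmi hm hspos hsm
    have hFnn : 0 ≤ ∫ ω, gtest ε δ R s (X ω) ∂ℙ := integral_nonneg fun ω => (gtest_pos _ _).le
    have hpow := pow_le_pow_left₀ hFnn hsmall (2^k)
    have hexp : (Real.exp (s * m + s^2 * (R + δ)^2))^(2^k) =
        Real.exp (lam * m + lam^2 * (R+δ)^2 * (1/2)^k) := by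
      rw [← Real.exp_nat_mul]
      congr 1
      push_cast
      rw [hs]
      simp only [one_div, inv_pow]
      field_simp
    rw [hexp] at hpow
    calc ∫ ω, gtest ε δ R lam (X ω) ∂ℙ
        ≤ Real.exp (CP * lam^2 * (1 - (1/2)^k)) * (∫ ω, gtest ε δ R s (X ω) ∂ℙ)^(2^k) :=
          poincare_iter hX hP hCP hε hδ hR hlam hu k
      _ ≤ Real.exp (CP * lam^2 * (1 - (1/2)^k)) *
            Real.exp (lam * m + lam^2 * (R+δ)^2 * (1/2)^k) :=
          mul_le_mul_of_nonneg_left hpow (Real.exp_pos _).le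
      _ = Real.exp (CP * lam^2 * (1 - (1/2)^k) + (lam * m + lam^2 * (R+δ)^2 * (1/2)^k)) :=
          (Real.exp_add _ _).symm
      _ ≤ a k := by
          rw [ha]
          apply Real.exp_le_exp.2
          have h1 : (0:ℝ) ≤ (1/2:ℝ)^k := by positivity
          have h2 : CP * lam^2 * (1 - (1/2)^k) ≤ CP * lam^2 := by
            nlinarith [mul_nonneg (mul_nonneg hCP.le (sq_nonneg lam)) h1]
          linarith
  have htenda : Filter.Tendsto a Filter.atTop (nhds (Real.exp (lam * m + CP * lam^2))) := by
    rw [ha]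
    have h0 : Filter.Tendsto (fun k : ℕ => lam * m + CP * lam^2 + lam^2 * (R+δ)^2 * (1/2)^k)
        Filter.atTop (nhds (lam * m + CP * lam^2)) := by
      have := tendsto_pow_atTop_nhds_zero_of_lt_one (by norm_num : (0:ℝ) ≤ 1/2)
        (by norm_num : (1/2:ℝ) < 1)
      have h2 := this.const_mul (lam^2 * (R+δ)^2)
      rw [mul_zero] at h2
      simpa using (h2.const_add (lam * m + CP * lam^2))
    exact (Real.continuous_exp.tendsto _).comp h0
  exact ge_of_tendsto htenda hbound

end MGF




section Iso
variable {Ω : Type} [MeasureSpace Ω] [IsProbabilityMeasure (ℙ : Measure Ω)]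
  {n : ℕ} {X : Ω → EuclideanSpace ℝ (Fin n)} {CP ε : ℝ}

lemma coord_meas (hX : Measurable X) (i : Fin n) : Measurable (fun ω => X ω i) :=
  (measurable_pi_apply i).comp ((WithLp.measurable_ofLp 2 _).comp hX)

lemma coordsq_int (hX : Measurable X) (hiso : IsIsotropicRV ℙ X) (i : Fin n) :
    Integrable (fun ω => (X ω i)^2) ℙ := by
  by_contra hni
  have h := hiso.2 i i
  rw [if_pos rfl] at h
  have : ¬ Integrable (fun ω => X ω i * X ω i) ℙ := by
    contrapose! hni
    simpa [sq] using hni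
  rw [integral_undef this] at h
  norm_num at h

lemma normsq_eq (x : EuclideanSpace ℝ (Fin n)) : ‖x‖^2 = ∑ i, (x i)^2 := by
  rw [EuclideanSpace.norm_eq, Real.sq_sqrt (by positivity)]
  congr 1
  funext i
  rw [Real.norm_eq_abs, sq_abs]

lemma normsq_int (hX : Measurable X) (hiso : IsIsotropicRV ℙ X) :
    Integrable (fun ω => ‖X ω‖^2) ℙ := by
  have : (fun ω => ‖X ω‖^2) = fun ω => ∑ i, (X ω i)^2 := by
    funext ω; exact normsq_eq (X ω)
  rw [this]
  exact integrable_finset_sum _ fun i _ => coordsq_int hX hiso i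

lemma normsq_integral (hX : Measurable X) (hiso : IsIsotropicRV ℙ X) :
    ∫ ω, ‖X ω‖^2 ∂ℙ = n := by
  have h1 : (fun ω => ‖X ω‖^2) = fun ω => ∑ i, (X ω i)^2 := by
    funext ω; exact normsq_eq (X ω)
  rw [h1, integral_finset_sum _ fun i _ => coordsq_int hX hiso i]
  have h2 : ∀ i : Fin n, ∫ ω, (X ω i)^2 ∂ℙ = 1 := by
    intro i
    have := hiso.2 i i
    rw [if_pos rfl] at this
    rw [← this]
    congr 1; funext ω; ring
  simp [h2]

lemma sqrt_int (hX : Measurable X) (hiso : IsIsotropicRV ℙ X) (ε : ℝ) :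
    Integrable (fun ω => Real.sqrt (‖X ω‖^2 + ε^2)) ℙ := by
  apply Integrable.mono ((normsq_int hX hiso).add (integrable_const (ε^2 + 1)))
    (((hX.norm.pow_const 2).add_const (ε^2)).sqrt).aestronglyMeasurable
  filter_upwards with ω
  rw [Real.norm_eq_abs, abs_of_nonneg (Real.sqrt_nonneg _), Real.norm_eq_abs]
  have h1 : Real.sqrt (‖X ω‖^2 + ε^2) ≤ ‖X ω‖^2 + ε^2 + 1 := by
    nlinarith [Real.sq_sqrt (show (0:ℝ) ≤ ‖X ω‖^2 + ε^2 by positivity),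
      Real.sqrt_nonneg (‖X ω‖^2 + ε^2)]
  have h2 : (0:ℝ) ≤ ‖X ω‖^2 + ε^2 + 1 := by positivity
  simp only [Pi.add_apply]
  rw [abs_of_nonneg (by positivity : (0:ℝ) ≤ ‖X ω‖^2 + (ε^2+1))]
  linarith

lemma sqrt_integral_le (hX : Measurable X) (hiso : IsIsotropicRV ℙ X) (hε : 0 ≤ ε) :
    ∫ ω, Real.sqrt (‖X ω‖^2 + ε^2) ∂ℙ ≤ Real.sqrt n + ε := by
  set f : Ω → ℝ := fun ω => Real.sqrt (‖X ω‖^2 + ε^2) with hf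
  have hfm : Measurable f := ((hX.norm.pow_const 2).add_const (ε^2)).sqrt
  have hsqint : Integrable (fun ω => f ω ^ 2) ℙ := by
    have : (fun ω => f ω ^ 2) = fun ω => ‖X ω‖^2 + ε^2 := by
      funext ω
      rw [hf, Real.sq_sqrt (by positivity)]
    rw [this]
    exact (normsq_int hX hiso).add (integrable_const _)
  have hmem : MemLp f 2 ℙ := (memLp_two_iff_integrable_sq hfm.aestronglyMeasurable).2 hsqint
  have hvar := variance_nonneg f ℙ
  rw [variance_eq_sub hmem] at hvar
  have hfsq : ∫ ω, (f ^ 2) ω ∂ℙ = (n : ℝ) + ε^2 := by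
    have : (f ^ 2 : Ω → ℝ) = fun ω => ‖X ω‖^2 + ε^2 := by
      funext ω
      rw [Pi.pow_apply, hf, Real.sq_sqrt (by positivity)]
    rw [this, integral_add (normsq_int hX hiso) (integrable_const _),
      normsq_integral hX hiso, integral_const]
    simp
  rw [hfsq] at hvar
  have hint_nn : 0 ≤ ∫ ω, f ω ∂ℙ := integral_nonneg fun ω => Real.sqrt_nonneg _
  have h1 : ∫ ω, f ω ∂ℙ ≤ Real.sqrt ((n:ℝ) + ε^2) := by
    rw [Real.le_sqrt hint_nn (by positivity)]
    linarith
  have h2 : Real.sqrt ((n:ℝ) + ε^2) ≤ Real.sqrt n + ε := by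
    have hle : (n:ℝ) + ε^2 ≤ (Real.sqrt n + ε)^2 := by
      have := Real.sq_sqrt (show (0:ℝ) ≤ n by positivity)
      nlinarith [Real.sqrt_nonneg (n:ℝ)]
    calc Real.sqrt ((n:ℝ) + ε^2) ≤ Real.sqrt ((Real.sqrt n + ε)^2) := Real.sqrt_le_sqrt hle
      _ = Real.sqrt n + ε := Real.sqrt_sq (by positivity)
  linarith

lemma one_le_poincare (hn : 0 < n) (hX : Measurable X) (hiso : IsIsotropicRV ℙ X)
    (hCP : 0 < CP) (hP : IsPoincareConst ℙ X CP) : 1 ≤ CP := by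
  set i₀ : Fin n := ⟨0, hn⟩ with hi₀
  set f : EuclideanSpace ℝ (Fin n) → ℝ := ⇑(EuclideanSpace.proj (𝕜 := ℝ) i₀) with hfdef
  have hfc : ContDiff ℝ 1 f := (EuclideanSpace.proj (𝕜 := ℝ) i₀).contDiff
  have happ : ∀ x : EuclideanSpace ℝ (Fin n), f x = x i₀ := fun x => rfl
  have hPf := hP f hfc
  -- the variance equals 1
  have hmeas : Measurable fun ω => X ω i₀ := coord_meas hX i₀
  have hmem : MemLp (fun ω => f (X ω)) 2 ℙ := by
    apply (memLp_two_iff_integrable_sq _).2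
    · have : (fun ω => f (X ω) ^ 2) = fun ω => (X ω i₀)^2 := by
        funext ω; rw [happ]
      rw [this]
      exact coordsq_int hX hiso i₀
    · exact hmeas.aestronglyMeasurable
  have hvar : variance (fun ω => f (X ω)) ℙ = 1 := by
    rw [variance_eq_sub hmem]
    have h1 : ∫ ω, ((fun ω => f (X ω)) ^ 2) ω ∂ℙ = 1 := by
      have : ((fun ω => f (X ω)) ^ 2 : Ω → ℝ) = fun ω => X ω i₀ * X ω i₀ := by
        funext ω; rw [Pi.pow_apply, happ]; ring
      rw [this]
      have := hiso.2 i₀ i₀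
      rwa [if_pos rfl] at this
    have h2 : ∫ ω, f (X ω) ∂ℙ = 0 := by
      have : (fun ω => f (X ω)) = fun ω => X ω i₀ := by funext ω; rw [happ]
      rw [this]; exact hiso.1 i₀
    rw [h1, h2]
    norm_num
  -- the gradient has norm at most 1
  have hgrad : ∀ x : EuclideanSpace ℝ (Fin n), ‖gradient f x‖ ≤ 1 := by
    intro x
    have h1 : gradient f x = (InnerProductSpace.toDual ℝ _).symm (fderiv ℝ f x) := rfl
    rw [h1, LinearIsometryEquiv.norm_map, hfdef, ContinuousLinearMap.fderiv]
    apply ContinuousLinearMap.opNorm_le_bound _ zero_le_one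
    intro y
    rw [one_mul]
    have : ‖(EuclideanSpace.proj (𝕜 := ℝ) i₀) y‖ = |y i₀| := rfl
    rw [this]
    have h2 : |y i₀| = Real.sqrt ((y i₀)^2) := (Real.sqrt_sq_eq_abs _).symm
    rw [h2, EuclideanSpace.norm_eq]
    apply Real.sqrt_le_sqrt
    have h3 : (y i₀)^2 = ‖y i₀‖^2 := by rw [Real.norm_eq_abs, sq_abs]
    rw [h3]
    exact Finset.single_le_sum (f := fun i => ‖y i‖^2) (fun i _ => by positivity)
      (Finset.mem_univ i₀)
  have hgint : ∫ ω, ‖gradient f (X ω)‖^2 ∂ℙ ≤ 1 := by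
    calc ∫ ω, ‖gradient f (X ω)‖^2 ∂ℙ ≤ ∫ (_ : Ω), (1:ℝ) ∂ℙ := by
          apply integral_mono_of_nonneg (Filter.Eventually.of_forall fun ω => by positivity)
            (integrable_const _)
          filter_upwards with ω
          have := hgrad (X ω)
          nlinarith [norm_nonneg (gradient f (X ω))]
      _ = 1 := by simp
  rw [hvar] at hPf
  nlinarith

end Iso

section Indep
variable {Ω : Type} [MeasureSpace Ω] [IsProbabilityMeasure (ℙ : Measure Ω)]

lemma indep_integral_prod {ι : Type*} {ψ : ι → Ω → ℝ} (hmeas : ∀ i, Measurable (ψ i))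
    (hnn : ∀ i ω, 0 ≤ ψ i ω)
    (hindep : iIndepFun ψ ℙ) (s : Finset ι) :
    ∫ ω, ∏ j ∈ s, ψ j ω ∂ℙ = ∏ j ∈ s, ∫ ω, ψ j ω ∂ℙ := by
  classical
  induction s using Finset.cons_induction with
  | empty => simp
  | cons a s ha ih =>
    simp only [Finset.prod_cons]
    have hindep2 : IndepFun (∏ j ∈ s, ψ j) (ψ a) ℙ :=
      hindep.indepFun_finsetProd_of_notMem hmeas ha
    have hprodmeas : Measurable (∏ j ∈ s, ψ j) := by
      rw [Finset.prod_fn]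
      exact Finset.measurable_prod s fun i _ => hmeas i
    have hkey := hindep2.symm.integral_mul_eq_mul_integral
      (hmeas a).aestronglyMeasurable hprodmeas.aestronglyMeasurable
    have h1 : ∫ ω, ψ a ω * ∏ j ∈ s, ψ j ω ∂ℙ = ∫ ω, (ψ a * ∏ j ∈ s, ψ j) ω ∂ℙ := by
      congr 1; funext ω; rw [Pi.mul_apply, Finset.prod_apply]
    have h2 : ∫ ω, (∏ j ∈ s, ψ j) ω ∂ℙ = ∫ ω, ∏ j ∈ s, ψ j ω ∂ℙ := by
      congr 1; funext ω; rw [Finset.prod_apply]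
    calc ∫ ω, ψ a ω * ∏ j ∈ s, ψ j ω ∂ℙ = ∫ ω, (ψ a * ∏ j ∈ s, ψ j) ω ∂ℙ := h1
      _ = (∫ ω, ψ a ω ∂ℙ) * ∫ ω, (∏ j ∈ s, ψ j) ω ∂ℙ := hkey
      _ = (∫ ω, ψ a ω ∂ℙ) * ∏ j ∈ s, ∫ ω, ψ j ω ∂ℙ := by rw [h2, ih]


end Indep

theorem stmt8 :
    ∃ c₁ c₂ : ℝ, 0 < c₁ ∧ 0 < c₂ ∧
    ∀ (ℓ n : ℕ), 1 ≤ n →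
    ∀ (Ω : Type) (_ : MeasureSpace Ω), IsProbabilityMeasure (ℙ : Measure Ω) →
    ∀ (X : Fin ℓ → Ω → EuclideanSpace ℝ (Fin n)),
      (∀ j, Measurable (X j)) →
      iIndepFun X ℙ →
      (∀ j, IsLogConcaveRV ℙ (X j)) →
      (∀ j, IsIsotropicRV ℙ (X j)) →
    ∀ (CP : ℝ), 0 < CP → (∀ j, IsPoincareConst ℙ (X j) CP) →
      CP ≤ Real.sqrt n → (ℓ : ℝ) < 2 * Real.sqrt n / CP →
    ∀ t : ℝ, 0 < t →
      (ℙ {ω | (1 + t) * Real.sqrt n ^ ℓ ≤ ∏ j, ‖X j ω‖}).toReal ≤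
        Real.exp (-(min (c₁ * n * Real.log (1 + t) ^ 2 / (CP ^ 2 * ℓ))
          (c₂ * Real.sqrt n * Real.log (1 + t) / CP))) := by
  refine ⟨1/16, 1/4, by norm_num, by norm_num, ?_⟩
  intro ℓ n hn Ω _ hprob X hXmeas hXindep _hlogc hiso CP hCP hPoin _hCPn _hℓbound t ht
  haveI := hprob
  set L := Real.log (1 + t) with hLdef
  have hL : 0 < L := Real.log_pos (by linarith)
  have hsn : 1 ≤ Real.sqrt n := by
    rw [show (1:ℝ) = Real.sqrt 1 by simp]
    exact Real.sqrt_le_sqrt (by exact_mod_cast hn)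
  have hsn0 : 0 < Real.sqrt n := by linarith
  have hnsq : Real.sqrt n ^ 2 = n := Real.sq_sqrt (by positivity)
  rcases Nat.eq_zero_or_pos ℓ with hℓ0 | hℓpos
  · subst hℓ0
    have hempty : {ω : Ω | (1 + t) * Real.sqrt n ^ (0:ℕ) ≤ ∏ j : Fin 0, ‖X j ω‖} = ∅ := by
      ext ω
      simp only [pow_zero, mul_one, Set.mem_setOf_eq, Set.mem_empty_iff_false, iff_false]
      rw [Finset.univ_eq_empty, Finset.prod_empty]
      linarith
    rw [hempty, measure_empty]
    simp only [ENNReal.toReal_zero]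
    exact (Real.exp_pos _).le
  -- main case : 1 ≤ ℓ
  have hℓR : (0:ℝ) < ℓ := by exact_mod_cast hℓpos
  have hCP1 : 1 ≤ CP := one_le_poincare hn (hXmeas ⟨0, hℓpos⟩) (hiso ⟨0, hℓpos⟩) hCP
    (hPoin ⟨0, hℓpos⟩)
  set ε := Real.sqrt n * L / (4 * ℓ) with hεdef
  have hε : 0 < ε := by positivity
  set a₀ := Real.sqrt n * (L + ℓ) with ha₀def
  have ha₀ : 0 < a₀ := by positivity
  set R := a₀ + 1 with hRdef
  have hR : 0 ≤ R := by positivity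
  set A := {ω : Ω | (1 + t) * Real.sqrt n ^ ℓ ≤ ∏ j, ‖X j ω‖} with hAdef
  have hAmeas : MeasurableSet A := by
    apply measurableSet_le measurable_const
    exact Finset.measurable_prod _ fun j _ => (hXmeas j).norm
  -- event inclusion
  have hincl : ∀ ω ∈ A, a₀ - ℓ * ε ≤ ∑ j, sphi ε R (Real.sqrt (‖X j ω‖^2 + ε^2)) := by
    intro ω hω
    have hA : (1 + t) * Real.sqrt n ^ ℓ ≤ ∏ j, ‖X j ω‖ := hω
    have hrhs : (0:ℝ) < (1 + t) * Real.sqrt n ^ ℓ := by positivity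
    have hpos : ∀ j, 0 < ‖X j ω‖ := by
      intro j
      rcases (norm_nonneg (X j ω)).lt_or_eq with h | h
      · exact h
      · exfalso
        have : ∏ j, ‖X j ω‖ = 0 := Finset.prod_eq_zero (Finset.mem_univ j) h.symm
        rw [this] at hA
        linarith
    -- sum of norms is large
    have hlogsum : L + (ℓ:ℝ) * Real.log (Real.sqrt n) ≤ ∑ j, Real.log ‖X j ω‖ := by
      have h1 := Real.log_le_log hrhs hA
      rw [Real.log_mul (by positivity) (by positivity), Real.log_pow] at h1
      rw [Real.log_prod (fun j _ => (hpos j).ne')] at h1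
      exact h1
    have hsum : a₀ ≤ ∑ j, ‖X j ω‖ := by
      have hj : ∀ j : Fin ℓ, Real.log ‖X j ω‖ ≤ ‖X j ω‖ / Real.sqrt n - 1
          + Real.log (Real.sqrt n) := by
        intro j
        have h2 := Real.log_le_sub_one_of_pos (div_pos (hpos j) hsn0)
        rw [Real.log_div (hpos j).ne' hsn0.ne'] at h2
        linarith
      have h3 := Finset.sum_le_sum (fun j (_ : j ∈ Finset.univ) => hj j)
      rw [Finset.sum_add_distrib, Finset.sum_sub_distrib, Finset.sum_const, Finset.sum_const,
        Finset.card_univ, Fintype.card_fin, ← Finset.sum_div] at h3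
      have h4 : L + (ℓ:ℝ) ≤ (∑ j, ‖X j ω‖) / Real.sqrt n := by
        have := le_trans hlogsum h3
        have hsmul : (ℓ:ℝ) • Real.log (Real.sqrt n) = (ℓ:ℝ) * Real.log (Real.sqrt n) := by
          simp [smul_eq_mul]
        have hsmul2 : (ℓ:ℝ) • (1:ℝ) = (ℓ:ℝ) := by simp
        rw [nsmul_eq_mul, nsmul_eq_mul] at this
        linarith
      calc a₀ = Real.sqrt n * (L + ℓ) := ha₀def
        _ ≤ Real.sqrt n * ((∑ j, ‖X j ω‖) / Real.sqrt n) :=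
            mul_le_mul_of_nonneg_left h4 hsn0.le
        _ = ∑ j, ‖X j ω‖ := by field_simp
    -- from norms to sphi
    have hminsum : a₀ ≤ ∑ j, min (Real.sqrt (‖X j ω‖^2 + ε^2)) R := by
      have hhj : ∀ j : Fin ℓ, ‖X j ω‖ ≤ Real.sqrt (‖X j ω‖^2 + ε^2) := by
        intro j
        calc ‖X j ω‖ = Real.sqrt (‖X j ω‖^2) := (Real.sqrt_sq (norm_nonneg _)).symm
          _ ≤ _ := Real.sqrt_le_sqrt (by nlinarith)
      by_cases hcase : ∀ j : Fin ℓ, Real.sqrt (‖X j ω‖^2 + ε^2) ≤ R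
      · calc a₀ ≤ ∑ j, ‖X j ω‖ := hsum
          _ ≤ ∑ j, min (Real.sqrt (‖X j ω‖^2 + ε^2)) R := by
            apply Finset.sum_le_sum
            intro j _
            rw [min_eq_left (hcase j)]
            exact hhj j
      · push_neg at hcase
        obtain ⟨j₀, hj₀⟩ := hcase
        calc a₀ ≤ R := by rw [hRdef]; linarith
          _ = min (Real.sqrt (‖X j₀ ω‖^2 + ε^2)) R := (min_eq_right hj₀.le).symm
          _ ≤ ∑ j, min (Real.sqrt (‖X j ω‖^2 + ε^2)) R := by
            apply Finset.single_le_sum (f := fun j => min (Real.sqrt (‖X j ω‖^2 + ε^2)) R)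
              (fun j _ => le_min (Real.sqrt_nonneg _) hR) (Finset.mem_univ j₀)
    have hφj : ∀ j : Fin ℓ, min (Real.sqrt (‖X j ω‖^2 + ε^2)) R - ε ≤
        sphi ε R (Real.sqrt (‖X j ω‖^2 + ε^2)) := fun j => min_le_sphi ε R _ hε
    have h5 := Finset.sum_le_sum (fun j (_ : j ∈ Finset.univ) => hφj j)
    rw [Finset.sum_sub_distrib, Finset.sum_const, Finset.card_univ, Fintype.card_fin,
      nsmul_eq_mul] at h5
    linarith
  -- the Chernoff bound for admissible lam
  have key : ∀ lam : ℝ, 0 < lam → CP * lam^2 ≤ 1 →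
      (ℙ A).toReal ≤ Real.exp (-(lam * Real.sqrt n * L / 2) + CP * lam^2 * ℓ) := by
    intro lam hlam hu
    set c := a₀ - ℓ * ε with hcdef
    -- pointwise : indicator ≤ exponential
    have hptwise : ∀ ω, A.indicator (fun _ => (1:ℝ)) ω ≤
        Real.exp (-(lam * c)) * ∏ j, gtest ε ε R lam (X j ω) := by
      intro ω
      have hprod_eq : Real.exp (-(lam * c)) * ∏ j, gtest ε ε R lam (X j ω) =
          Real.exp (lam * ((∑ j, sphi ε R (Real.sqrt (‖X j ω‖^2 + ε^2))) - c)) := by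
        unfold gtest
        rw [← Real.exp_sum, ← Real.exp_add]
        congr 1
        rw [← Finset.mul_sum]
        ring
      rw [hprod_eq]
      by_cases hω : ω ∈ A
      · rw [Set.indicator_of_mem hω]
        rw [show (1:ℝ) = Real.exp 0 by simp]
        apply Real.exp_le_exp.2
        have := hincl ω hω
        have hnn : 0 ≤ (∑ j, sphi ε R (Real.sqrt (‖X j ω‖^2 + ε^2))) - c := by
          rw [hcdef]; linarith
        positivity
      · rw [Set.indicator_of_notMem hω]
        positivity
    -- integrability of the product
    have hψmeas : ∀ j : Fin ℓ, Measurable (fun ω => gtest ε ε R lam (X j ω)) :=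
      fun j => gtest_meas (hXmeas j) hε hε lam
    have hprodmeas : Measurable (fun ω => ∏ j, gtest ε ε R lam (X j ω)) :=
      Finset.measurable_prod _ fun j _ => hψmeas j
    have hprodint : Integrable (fun ω => ∏ j, gtest ε ε R lam (X j ω)) ℙ := by
      apply memLp_one_iff_integrable.1
      apply MemLp.of_bound hprodmeas.aestronglyMeasurable (Real.exp (lam * R) ^ ℓ)
      filter_upwards with ω
      rw [Real.norm_eq_abs, abs_of_pos (Finset.prod_pos fun j _ => gtest_pos lam (X j ω))]
      calc ∏ j, gtest ε ε R lam (X j ω) ≤ ∏ _j : Fin ℓ, Real.exp (lam * R) := by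
            apply Finset.prod_le_prod (fun j _ => (gtest_pos lam (X j ω)).le)
              (fun j _ => gtest_le_bound hε hε hR hlam.le (X j ω))
        _ = Real.exp (lam * R) ^ ℓ := by
            rw [Finset.prod_const, Finset.card_univ, Fintype.card_fin]
    -- Markov
    have hmarkov : (ℙ A).toReal ≤
        Real.exp (-(lam * c)) * ∫ ω, ∏ j, gtest ε ε R lam (X j ω) ∂ℙ := by
      rw [← measureReal_def, ← integral_indicator_one hAmeas, ← integral_const_mul]
      apply integral_mono ((integrable_const (1:ℝ)).indicator hAmeas) (hprodint.const_mul _)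
      exact hptwise
    -- independence
    have hψindep : iIndepFun
        (fun j (ω : Ω) => gtest ε ε R lam (X j ω)) ℙ := by
      exact hXindep.comp (fun _ => gtest ε ε R lam) (fun j => gtest_meas' ε ε R hε hε lam)
    have hfactor : ∫ ω, ∏ j, gtest ε ε R lam (X j ω) ∂ℙ =
        ∏ j, ∫ ω, gtest ε ε R lam (X j ω) ∂ℙ :=
      indep_integral_prod hψmeas (fun j ω => (gtest_pos _ _).le) hψindep Finset.univ
    -- mgf for each factor
    have hmgf : ∀ j : Fin ℓ, ∫ ω, gtest ε ε R lam (X j ω) ∂ℙ ≤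
        Real.exp (lam * (Real.sqrt n + ε) + CP * lam^2) := fun j =>
      mgf_bound (hXmeas j) (hPoin j) hCP hε hε hR (sqrt_int (hXmeas j) (hiso j) ε)
        (sqrt_integral_le (hXmeas j) (hiso j) hε.le) hlam hu
    have hprodle : ∏ j, ∫ ω, gtest ε ε R lam (X j ω) ∂ℙ ≤
        Real.exp (lam * (Real.sqrt n + ε) + CP * lam^2) ^ ℓ := by
      calc ∏ j, ∫ ω, gtest ε ε R lam (X j ω) ∂ℙ
          ≤ ∏ _j : Fin ℓ, Real.exp (lam * (Real.sqrt n + ε) + CP * lam^2) :=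
            Finset.prod_le_prod (fun j _ => integral_nonneg fun ω => (gtest_pos _ _).le)
              (fun j _ => hmgf j)
        _ = _ := by rw [Finset.prod_const, Finset.card_univ, Fintype.card_fin]
    -- combine
    calc (ℙ A).toReal ≤ Real.exp (-(lam * c)) * ∫ ω, ∏ j, gtest ε ε R lam (X j ω) ∂ℙ := hmarkov
      _ ≤ Real.exp (-(lam * c)) * (Real.exp (lam * (Real.sqrt n + ε) + CP * lam^2) ^ ℓ) := by
          apply mul_le_mul_of_nonneg_left _ (Real.exp_pos _).le
          rw [hfactor]
          exact hprodle
      _ = Real.exp (-(lam * c) + ℓ * (lam * (Real.sqrt n + ε) + CP * lam^2)) := by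
          rw [← Real.exp_nat_mul, ← Real.exp_add]
      _ = Real.exp (-(lam * Real.sqrt n * L / 2) + CP * lam^2 * ℓ) := by
          congr 1
          rw [hcdef, ha₀def, hεdef]
          field_simp
          ring
  -- optimization over lam
  set lam₁ := Real.sqrt n * L / (4 * CP * ℓ) with hlam₁def
  have hlam₁ : 0 < lam₁ := by positivity
  by_cases hcase : CP * lam₁^2 ≤ 1
  · -- regime 1
    have hbound := key lam₁ hlam₁ hcase
    apply le_trans hbound
    apply Real.exp_le_exp.2
    have e1 : lam₁ * Real.sqrt n * L / 2 = (Real.sqrt n * L)^2 / (8*CP*ℓ) := by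
      rw [hlam₁def]
      field_simp
      ring
    have e2 : CP * lam₁^2 * ℓ = (Real.sqrt n * L)^2 / (16*CP*ℓ) := by
      rw [hlam₁def]
      field_simp
      ring
    have hexp_eq : -(lam₁ * Real.sqrt n * L / 2) + CP * lam₁^2 * ℓ
        = -((Real.sqrt n * L)^2 / (16 * CP * ℓ)) := by
      rw [e1, e2]
      ring
    rw [hexp_eq, neg_le_neg_iff, mul_pow, hnsq]
    have hmin : min (1/16 * n * L ^ 2 / (CP ^ 2 * ℓ)) (1/4 * Real.sqrt n * L / CP)
        ≤ 1/16 * n * L ^ 2 / (CP ^ 2 * ℓ) := min_le_left _ _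
    apply le_trans hmin
    rw [show (1:ℝ)/16 * n * L^2 / (CP^2*ℓ) = n * L^2 / (16 * (CP^2 * ℓ)) by ring,
      show n * L^2 / (16 * CP * ℓ) = n * L^2 / (16 * (CP * ℓ)) by ring]
    apply div_le_div_of_nonneg_left (by positivity) (by positivity)
    nlinarith [mul_nonneg (mul_nonneg hCP.le (by linarith : (0:ℝ) ≤ CP - 1)) hℓR.le]
  · -- regime 2
    push_neg at hcase
    set lam₂ := 1 / Real.sqrt CP with hlam₂def
    have hsCP : 0 < Real.sqrt CP := Real.sqrt_pos.2 hCP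
    have hsCP1 : 1 ≤ Real.sqrt CP := by
      rw [show (1:ℝ) = Real.sqrt 1 by simp]
      exact Real.sqrt_le_sqrt hCP1
    have hlam₂pos : 0 < lam₂ := by positivity
    have hlam₂sq : CP * lam₂^2 = 1 := by
      rw [hlam₂def, div_pow, one_pow, Real.sq_sqrt hCP.le]
      field_simp
    have hbound := key lam₂ hlam₂pos hlam₂sq.le
    apply le_trans hbound
    apply Real.exp_le_exp.2
    -- from the case hypothesis : ℓ < √n L / (4 √CP)
    have hℓlt : (ℓ:ℝ) < Real.sqrt n * L / (4 * Real.sqrt CP) := by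
      have h1 : 1 < CP * lam₁^2 := hcase
      rw [hlam₁def] at h1
      have h2 : (4 * Real.sqrt CP * ℓ)^2 < (Real.sqrt n * L)^2 := by
        have : CP * (Real.sqrt n * L / (4 * CP * ℓ))^2 =
            (Real.sqrt n * L)^2 / (16 * CP * ℓ^2) := by
          field_simp
          ring
        rw [this] at h1
        rw [lt_div_iff₀ (by positivity)] at h1
        have hx : (4 * Real.sqrt CP * ℓ)^2 = 16 * CP * ℓ^2 := by
          rw [mul_pow, mul_pow, Real.sq_sqrt hCP.le]
          ring
        linarith
      have h3 := lt_of_pow_lt_pow_left₀ 2 (by positivity) h2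
      rw [lt_div_iff₀ (by positivity)]
      linarith
    have hCPsqrt : Real.sqrt CP ≤ CP := by
      calc Real.sqrt CP ≤ Real.sqrt (CP^2) := Real.sqrt_le_sqrt (by nlinarith)
        _ = CP := Real.sqrt_sq hCP.le
    have hrhs : CP * lam₂^2 * ℓ = ℓ := by rw [hlam₂sq]; ring
    rw [hrhs]
    have hlhs : lam₂ * Real.sqrt n * L / 2 = Real.sqrt n * L / (2 * Real.sqrt CP) := by
      rw [hlam₂def]; field_simp
    rw [hlhs]
    have hmin : min (1/16 * n * L ^ 2 / (CP ^ 2 * ℓ)) (1/4 * Real.sqrt n * L / CP)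
        ≤ 1/4 * Real.sqrt n * L / CP := min_le_right _ _
    have h6 : 1/4 * Real.sqrt n * L / CP ≤ Real.sqrt n * L / (4 * Real.sqrt CP) := by
      rw [show (1:ℝ)/4 * Real.sqrt n * L / CP = Real.sqrt n * L / (4 * CP) by ring]
      apply div_le_div_of_nonneg_left (by positivity) (by positivity)
      nlinarith
    have h7 : Real.sqrt n * L / (4 * Real.sqrt CP) + ℓ < Real.sqrt n * L / (2 * Real.sqrt CP) := by
      have : Real.sqrt n * L / (2 * Real.sqrt CP) - Real.sqrt n * L / (4 * Real.sqrt CP)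
          = Real.sqrt n * L / (4 * Real.sqrt CP) := by
        field_simp
        ring
      linarith
    have h8 := le_trans hmin h6
    linarith
end

section
/- Let X be a real r×d matrix of rank r with rows v_1ᵀ,…,v_rᵀ ∈ ℝ^d, and for each i let V_i = span{ v_j : 1 ≤ j ≤ r, j ≠ i }. Then XXᵀ is invertible, each ‖Π_{V_i^⊥} v_i‖_2 > 0, and trace( (XXᵀ)^{−1} ) = Σ_{i=1}^r det( X_i X_iᵀ ) / det( XXᵀ ) = Σ_{i=1}^r 1 / ‖Π_{V_i^⊥} v_i‖_2², where X_i denotes the (r−1)×d matrix obtained from X by deleting the i-th row. -/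
open MeasureTheory Matrix

namespace Stmt12Aux

def complEquiv {r : ℕ} (i : Fin r) : {j : Fin r // j ≠ i} ⊕ Unit ≃ Fin r where
  toFun := Sum.elim Subtype.val fun _ => i
  invFun j := if h : j = i then Sum.inr () else Sum.inl ⟨j, h⟩
  left_inv x := by
    rcases x with ⟨j, hj⟩ | x
    · simp [hj]
    · simp
  right_inv j := by by_cases h : j = i <;> simp [h]

lemma det_eq_minor_mul_of_row {r : ℕ} (M : Matrix (Fin r) (Fin r) ℝ) (i : Fin r)
    (h : ∀ j, j ≠ i → M i j = 0) :
    M.det = (M.submatrix (fun j : {j : Fin r // j ≠ i} => j.val)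
        (fun j : {j : Fin r // j ≠ i} => j.val)).det * M i i := by
  rw [← Matrix.det_submatrix_equiv_self (complEquiv i) M]
  have hM : M.submatrix (complEquiv i) (complEquiv i) =
      Matrix.fromBlocks
        (M.submatrix (fun j : {j : Fin r // j ≠ i} => j.val)
          (fun j : {j : Fin r // j ≠ i} => j.val))
        (Matrix.of fun a (_ : Unit) => M a.val i)
        0 (Matrix.of fun (_ : Unit) (_ : Unit) => M i i) := by
    ext x y
    rcases x with a | a <;> rcases y with b | b <;>
      simp [complEquiv, Matrix.fromBlocks]
    exact h _ b.prop
  rw [hM, Matrix.det_fromBlocks_zero₂₁]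
  congr 1
  simp [Matrix.det_unique]

lemma det_eq_minor_mul_of_col {r : ℕ} (M : Matrix (Fin r) (Fin r) ℝ) (i : Fin r)
    (h : ∀ j, j ≠ i → M j i = 0) :
    M.det = (M.submatrix (fun j : {j : Fin r // j ≠ i} => j.val)
        (fun j : {j : Fin r // j ≠ i} => j.val)).det * M i i := by
  rw [← Matrix.det_transpose M, det_eq_minor_mul_of_row Mᵀ i (fun j hj => h j hj)]
  rw [← Matrix.transpose_submatrix, Matrix.det_transpose]
  rfl

lemma adjugate_diag {r : ℕ} (A : Matrix (Fin r) (Fin r) ℝ) (i : Fin r) :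
    A.adjugate i i = (A.submatrix (fun j : {j : Fin r // j ≠ i} => j.val)
      (fun j : {j : Fin r // j ≠ i} => j.val)).det := by
  rw [Matrix.adjugate_apply]
  rw [det_eq_minor_mul_of_row (A.updateRow i (Pi.single i 1)) i ?_]
  · have h1 : (A.updateRow i (Pi.single i 1)) i i = 1 := by simp
    have h2 : (A.updateRow i (Pi.single i 1)).submatrix
        (fun j : {j : Fin r // j ≠ i} => j.val) (fun j : {j : Fin r // j ≠ i} => j.val) =
        A.submatrix (fun j : {j : Fin r // j ≠ i} => j.val)
          (fun j : {j : Fin r // j ≠ i} => j.val) := by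
      ext a b
      simp [Matrix.updateRow_ne a.prop]
    rw [h1, h2, mul_one]
  · intro j hj
    simp [Pi.single_apply, hj]

lemma minor_mul {r d : ℕ} (X : Matrix (Fin r) (Fin d) ℝ) (i : Fin r) :
    (X * Xᵀ).submatrix (fun j : {j : Fin r // j ≠ i} => j.val)
      (fun j : {j : Fin r // j ≠ i} => j.val) =
    X.submatrix (fun j : {j : Fin r // j ≠ i} => j.val) id *
      (X.submatrix (fun j : {j : Fin r // j ≠ i} => j.val) id)ᵀ := by
  ext a b
  simp [Matrix.mul_apply]

lemma rank_isUnit {r : ℕ} (A : Matrix (Fin r) (Fin r) ℝ) (h : A.rank = r) :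
    IsUnit A.det := by
  rw [← Matrix.isUnit_iff_isUnit_det, ← Matrix.mulVec_surjective_iff_isUnit]
  have htop : LinearMap.range A.mulVecLin = ⊤ := by
    apply Submodule.eq_top_of_finrank_eq
    rw [← Matrix.rank, h]
    simp [Module.finrank_fintype_fun_eq_card]
  intro y
  have : y ∈ LinearMap.range A.mulVecLin := htop ▸ Submodule.mem_top
  obtain ⟨x, hx⟩ := this
  exact ⟨x, hx⟩

lemma trace_inv_eq {r : ℕ} (A : Matrix (Fin r) (Fin r) ℝ) :
    Matrix.trace A⁻¹ = ∑ i, A.adjugate i i / A.det := by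
  rw [Matrix.inv_def, Matrix.trace]
  apply Finset.sum_congr rfl
  intro i _
  simp [Matrix.diag, Ring.inverse_eq_inv', div_eq_inv_mul]

lemma key (r d : ℕ) (X : Matrix (Fin r) (Fin d) ℝ) (i : Fin r) :
    (X * Xᵀ).det =
      (X.submatrix (fun j : {j : Fin r // j ≠ i} => j.val) id *
        (X.submatrix (fun j : {j : Fin r // j ≠ i} => j.val) id)ᵀ).det *
      ‖(Submodule.orthogonalProjectionOnto
          (Submodule.span ℝ (Set.range fun j : {j : Fin r // j ≠ i} =>
            ((WithLp.equiv 2 (Fin d → ℝ)).symm (X j.val) : EuclideanSpace ℝ (Fin d))))ᗮ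
          ((WithLp.equiv 2 (Fin d → ℝ)).symm (X i)) : EuclideanSpace ℝ (Fin d))‖ ^ 2 := by
  classical
  set v : Fin r → EuclideanSpace ℝ (Fin d) :=
    fun j => (WithLp.equiv 2 (Fin d → ℝ)).symm (X j) with hv
  set V : Submodule ℝ (EuclideanSpace ℝ (Fin d)) :=
    Submodule.span ℝ (Set.range fun j : {j : Fin r // j ≠ i} => v j.val) with hV
  set p : EuclideanSpace ℝ (Fin d) := (Submodule.orthogonalProjectionOnto V (v i) : EuclideanSpace ℝ (Fin d))
    with hpdef
  have hproj : ((Submodule.orthogonalProjectionOnto Vᗮ (v i) : EuclideanSpace ℝ (Fin d))) = v i - p :=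
    Submodule.starProjection_orthogonal_val _
  have hpmem : p ∈ V := (Submodule.orthogonalProjectionOnto V (v i)).2
  have hwmem : v i - p ∈ Vᗮ := Submodule.sub_starProjection_mem_orthogonal _
  obtain ⟨c, hc⟩ : ∃ c : {j : Fin r // j ≠ i} → ℝ, ∑ j, c j • v j.val = p :=
    (Submodule.mem_span_range_iff_exists_fun ℝ).mp hpmem
  set c' : Fin r → ℝ := fun j => if h : j = i then 0 else c ⟨j, h⟩ with hc'
  set u : Fin d → ℝ := X i - ∑ j : Fin r, c' j • X j with hu
  -- p as a plain function
  have hpfun : ∀ k, p k = ∑ j : Fin r, c' j * X j k := by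
    intro k
    rw [← hc]
    have : (∑ j : {j : Fin r // j ≠ i}, c j • v j.val) k
        = ∑ j : {j : Fin r // j ≠ i}, c j * X j.val k := by
      rw [WithLp.ofLp_sum, Finset.sum_apply]
      rfl
    rw [this]
    rw [← Equiv.sum_comp (complEquiv i) (fun j => c' j * X j k)]
    rw [Fintype.sum_sum_type]
    simp only [complEquiv, Equiv.coe_fn_mk, Sum.elim_inl, Sum.elim_inr]
    have hr : ∀ x : {j : Fin r // j ≠ i}, c' ↑x * X (↑x) k = c x * X (↑x) k := by
      intro x
      rw [hc']
      simp [x.prop]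
    rw [Finset.sum_congr rfl (fun x _ => hr x)]
    have hzero : c' i = 0 := by simp [hc']
    simp [hzero]
  have hufun : ∀ k, (v i - p) k = u k := by
    intro k
    have : (v i - p) k = X i k - p k := rfl
    rw [this, hpfun k]
    simp [u, Finset.sum_apply]
  -- orthogonality
  have horth : ∀ j : Fin r, j ≠ i → u ⬝ᵥ X j = 0 := by
    intro j hj
    have hvj : v j ∈ V := Submodule.subset_span ⟨⟨j, hj⟩, rfl⟩
    have := (Submodule.mem_orthogonal V (v i - p)).mp hwmem (v j) hvj
    have h2 : (inner ℝ (v j) (v i - p) : ℝ) = ∑ k, X j k * u k := by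
      rw [PiLp.inner_apply]
      apply Finset.sum_congr rfl
      intro k _
      rw [hufun k]
      simp [RCLike.inner_apply, v]
      ring
    rw [h2] at this
    rw [dotProduct]
    rw [← this]
    apply Finset.sum_congr rfl
    intro k _
    ring
  have hnorm : u ⬝ᵥ u =
      ‖(Submodule.orthogonalProjectionOnto Vᗮ (v i) : EuclideanSpace ℝ (Fin d))‖ ^ 2 := by
    rw [hproj, ← real_inner_self_eq_norm_sq]
    rw [PiLp.inner_apply, dotProduct]
    apply Finset.sum_congr rfl
    intro k _
    rw [hufun k]
    simp [RCLike.inner_apply]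
    ring
  -- matrix T
  set T : Matrix (Fin r) (Fin r) ℝ :=
    1 - Matrix.of (fun j k => if j = i then c' k else 0) with hT
  have hci : c' i = 0 := by simp [hc']
  have hdetT : T.det = 1 := by
    rw [det_eq_minor_mul_of_col T i ?_]
    · have h1 : T i i = 1 := by simp [T, Matrix.one_apply, hci]
      have h2 : T.submatrix (fun j : {j : Fin r // j ≠ i} => j.val)
          (fun j : {j : Fin r // j ≠ i} => j.val) = 1 := by
        ext a b
        simp [T, Matrix.one_apply, a.prop, Subtype.ext_iff]
      rw [h1, h2, Matrix.det_one, mul_one]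
    · intro j hj
      simp [T, Matrix.one_apply, hj]
  have hTX : T * X = X.updateRow i u := by
    ext j l
    by_cases hj : j = i
    · subst hj
      rw [Matrix.updateRow_self]
      rw [Matrix.mul_apply]
      have : ∀ k, T j k * X k l = (if j = k then X k l else 0) - c' k * X k l := by
        intro k
        by_cases hk : j = k <;> simp [T, Matrix.one_apply, hk] <;> ring
      rw [Finset.sum_congr rfl (fun k _ => this k), Finset.sum_sub_distrib]
      simp [u, Finset.sum_apply, Finset.sum_ite_eq]
    · rw [Matrix.updateRow_ne hj, Matrix.mul_apply]
      have : ∀ k, T j k * X k l = if j = k then X k l else 0 := by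
        intro k
        simp [T, Matrix.one_apply, hj]
      rw [Finset.sum_congr rfl (fun k _ => this k)]
      simp [Finset.sum_ite_eq]
  -- determinants equal
  set Y : Matrix (Fin r) (Fin d) ℝ := X.updateRow i u with hY
  have hdet1 : (Y * Yᵀ).det = (X * Xᵀ).det := by
    have hassoc : T * X * (T * X)ᵀ = T * (X * Xᵀ) * Tᵀ := by
      rw [Matrix.transpose_mul]
      simp only [Matrix.mul_assoc]
    rw [← hTX, hassoc, Matrix.det_mul, Matrix.det_mul, Matrix.det_transpose, hdetT]
    ring
  -- block structure of Y Yᵀ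
  have hrow : ∀ j, j ≠ i → (Y * Yᵀ) i j = 0 := by
    intro j hj
    rw [Matrix.mul_apply]
    have : ∀ k, Y i k * Yᵀ k j = u k * X j k := by
      intro k
      simp [Y, Matrix.transpose_apply, Matrix.updateRow_self, Matrix.updateRow_ne hj]
    rw [Finset.sum_congr rfl (fun k _ => this k)]
    exact horth j hj
  have hminor : (Y * Yᵀ).submatrix (fun j : {j : Fin r // j ≠ i} => j.val)
      (fun j : {j : Fin r // j ≠ i} => j.val) =
      X.submatrix (fun j : {j : Fin r // j ≠ i} => j.val) id *
        (X.submatrix (fun j : {j : Fin r // j ≠ i} => j.val) id)ᵀ := by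
    ext a b
    rw [Matrix.submatrix_apply, Matrix.mul_apply, Matrix.mul_apply]
    apply Finset.sum_congr rfl
    intro k _
    simp [Y, Matrix.updateRow_ne a.prop, Matrix.updateRow_ne b.prop]
  have hii : (Y * Yᵀ) i i = u ⬝ᵥ u := by
    rw [Matrix.mul_apply]
    apply Finset.sum_congr rfl
    intro k _
    simp [Y, Matrix.updateRow_self]
  rw [← hdet1, det_eq_minor_mul_of_row (Y * Yᵀ) i hrow, hminor, hii, hnorm]

end Stmt12Aux

theorem stmt12 (r d : ℕ) (X : Matrix (Fin r) (Fin d) ℝ) (hrank : X.rank = r) :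
    IsUnit (X * Xᵀ).det ∧
    (∀ i : Fin r,
      0 < ‖(Submodule.orthogonalProjectionOnto
          (Submodule.span ℝ (Set.range fun j : {j : Fin r // j ≠ i} =>
            ((WithLp.equiv 2 (Fin d → ℝ)).symm (X j.val) : EuclideanSpace ℝ (Fin d))))ᗮ
          ((WithLp.equiv 2 (Fin d → ℝ)).symm (X i)) : EuclideanSpace ℝ (Fin d))‖) ∧
    Matrix.trace (X * Xᵀ)⁻¹ =
      ∑ i : Fin r,
        (X.submatrix (fun j : {j : Fin r // j ≠ i} => j.val) id *
          (X.submatrix (fun j : {j : Fin r // j ≠ i} => j.val) id)ᵀ).det /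
        (X * Xᵀ).det ∧
    Matrix.trace (X * Xᵀ)⁻¹ =
      ∑ i : Fin r,
        1 / ‖(Submodule.orthogonalProjectionOnto
          (Submodule.span ℝ (Set.range fun j : {j : Fin r // j ≠ i} =>
            ((WithLp.equiv 2 (Fin d → ℝ)).symm (X j.val) : EuclideanSpace ℝ (Fin d))))ᗮ
          ((WithLp.equiv 2 (Fin d → ℝ)).symm (X i)) : EuclideanSpace ℝ (Fin d))‖ ^ 2 := by
  classical
  have hdetU : IsUnit (X * Xᵀ).det :=
    Stmt12Aux.rank_isUnit _ (by rw [Matrix.rank_self_mul_transpose, hrank])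
  have hdet0 : (X * Xᵀ).det ≠ 0 := hdetU.ne_zero
  have hkey := fun i => Stmt12Aux.key r d X i
  have hs0 : ∀ i : Fin r,
      ‖(Submodule.orthogonalProjectionOnto
          (Submodule.span ℝ (Set.range fun j : {j : Fin r // j ≠ i} =>
            ((WithLp.equiv 2 (Fin d → ℝ)).symm (X j.val) : EuclideanSpace ℝ (Fin d))))ᗮ
          ((WithLp.equiv 2 (Fin d → ℝ)).symm (X i)) : EuclideanSpace ℝ (Fin d))‖ ≠ 0 := by
    intro i h0
    apply hdet0
    rw [hkey i, h0]
    ring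
  have hpos : ∀ i : Fin r,
      0 < ‖(Submodule.orthogonalProjectionOnto
          (Submodule.span ℝ (Set.range fun j : {j : Fin r // j ≠ i} =>
            ((WithLp.equiv 2 (Fin d → ℝ)).symm (X j.val) : EuclideanSpace ℝ (Fin d))))ᗮ
          ((WithLp.equiv 2 (Fin d → ℝ)).symm (X i)) : EuclideanSpace ℝ (Fin d))‖ :=
    fun i => lt_of_le_of_ne (norm_nonneg _) (Ne.symm (hs0 i))
  have htr : Matrix.trace (X * Xᵀ)⁻¹ =
      ∑ i : Fin r,
        (X.submatrix (fun j : {j : Fin r // j ≠ i} => j.val) id *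
          (X.submatrix (fun j : {j : Fin r // j ≠ i} => j.val) id)ᵀ).det /
        (X * Xᵀ).det := by
    rw [Stmt12Aux.trace_inv_eq]
    apply Finset.sum_congr rfl
    intro i _
    rw [Stmt12Aux.adjugate_diag, Stmt12Aux.minor_mul]
  refine ⟨hdetU, hpos, htr, ?_⟩
  rw [htr]
  apply Finset.sum_congr rfl
  intro i _
  have hm0 : (X.submatrix (fun j : {j : Fin r // j ≠ i} => j.val) id *
      (X.submatrix (fun j : {j : Fin r // j ≠ i} => j.val) id)ᵀ).det ≠ 0 := by
    intro h0
    apply hdet0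
    rw [hkey i, h0, zero_mul]
  have hsq : (‖(Submodule.orthogonalProjectionOnto
          (Submodule.span ℝ (Set.range fun j : {j : Fin r // j ≠ i} =>
            ((WithLp.equiv 2 (Fin d → ℝ)).symm (X j.val) : EuclideanSpace ℝ (Fin d))))ᗮ
          ((WithLp.equiv 2 (Fin d → ℝ)).symm (X i)) : EuclideanSpace ℝ (Fin d))‖ : ℝ) ^ 2 ≠ 0 :=
    pow_ne_zero 2 (hs0 i)
  rw [hkey i, mul_comm]
  rw [div_eq_div_iff (mul_ne_zero hsq hm0) hsq]
  ring
end

section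
/- Let ℓ ≥ 1 and let X_1,…,X_ℓ be independent random variables, each uniformly distributed on [−1,1], and set Z_ℓ = X_1 X_2 ⋯ X_ℓ. Then for every z with 0 < |z| ≤ 1: P( Z_ℓ ≤ z ) = 1/2 + (z/2) · Σ_{j=0}^{ℓ−1} ( log(1/|z|) )^j / j!. -/
open MeasureTheory ProbabilityTheory Real

noncomputable section

namespace Stmt14

open Set

def unif : Measure ℝ := (2 : ENNReal)⁻¹ • volume.restrict (Set.Icc (-1 : ℝ) 1)

instance : IsProbabilityMeasure unif := by
  constructor
  simp only [unif, Measure.smul_apply, Measure.restrict_apply MeasurableSet.univ,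
    Set.univ_inter, Real.volume_Icc, smul_eq_mul]
  rw [show ((1:ℝ) - (-1)) = 2 by norm_num]
  rw [ENNReal.ofReal_ofNat]
  exact ENNReal.inv_mul_cancel (by norm_num) (by norm_num)

lemma unif_singleton (t : ℝ) : unif {t} = 0 := by
  simp only [unif, Measure.smul_apply, Measure.restrict_apply (measurableSet_singleton t),
    smul_eq_mul]
  rw [measure_mono_null Set.inter_subset_left (measure_singleton t), mul_zero]

lemma unif_ae_ne_zero : ∀ᵐ x ∂unif, x ≠ 0 := by
  rw [ae_iff]
  have : {x : ℝ | ¬ x ≠ 0} = {0} := by ext x; simp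
  rw [this]; exact unif_singleton 0

def SS (ℓ : ℕ) (w : ℝ) : ℝ := ∑ j ∈ Finset.range ℓ, Real.log (1 / |w|) ^ j / Nat.factorial j

lemma SS_neg (ℓ : ℕ) (w : ℝ) : SS ℓ (-w) = SS ℓ w := by simp [SS]

lemma SS_one_abs (ℓ : ℕ) (hℓ : 1 ≤ ℓ) {w : ℝ} (hw : |w| = 1) : SS ℓ w = 1 := by
  unfold SS
  rw [hw]
  rw [Finset.sum_eq_single 0]
  · norm_num
  · intro j _ hj
    simp [Real.log_one, zero_pow hj]
  · intro h; exact absurd (Finset.mem_range.2 hℓ) h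

lemma log_one_div_abs_nonneg {w : ℝ} (hw : |w| ≤ 1) : 0 ≤ Real.log (1 / |w|) := by
  rcases eq_or_ne w 0 with h | h
  · simp [h]
  · exact Real.log_nonneg (one_le_one_div (abs_pos.2 h) hw)

lemma SS_nonneg (ℓ : ℕ) (w : ℝ) (hw : |w| ≤ 1) : 0 ≤ SS ℓ w := by
  refine Finset.sum_nonneg fun j _ => div_nonneg (pow_nonneg (log_one_div_abs_nonneg hw) j) (by positivity)

lemma mul_SS_le_one (ℓ : ℕ) {w : ℝ} (h0 : w ≠ 0) (hw : |w| ≤ 1) : |w| * SS ℓ w ≤ 1 := by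
  have habs : 0 < |w| := abs_pos.2 h0
  set t := Real.log (1 / |w|) with ht
  have ht0 : 0 ≤ t := log_one_div_abs_nonneg hw
  have hwe : |w| = Real.exp (-t) := by
    rw [ht, Real.log_div one_ne_zero (ne_of_gt habs), Real.log_one, zero_sub, neg_neg,
      Real.exp_log habs]
  have hsum : SS ℓ w ≤ Real.exp t := Real.sum_le_exp_of_nonneg ht0 ℓ
  calc |w| * SS ℓ w ≤ |w| * Real.exp t := by
        exact mul_le_mul_of_nonneg_left hsum habs.le
    _ = 1 := by rw [hwe, ← Real.exp_add]; simp

def F (ℓ : ℕ) (w : ℝ) : ℝ :=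
  if w ≤ -1 then 0 else if 1 ≤ w then 1 else if w = 0 then 1/2 else 1/2 + w/2 * SS ℓ w

lemma F_of_le_neg_one {ℓ : ℕ} {w : ℝ} (h : w ≤ -1) : F ℓ w = 0 := if_pos h

lemma F_of_one_le {ℓ : ℕ} {w : ℝ} (h : 1 ≤ w) : F ℓ w = 1 := by
  unfold F; rw [if_neg (by linarith), if_pos h]

lemma F_zero (ℓ : ℕ) : F ℓ 0 = 1/2 := by norm_num [F]

lemma F_mem (ℓ : ℕ) (w : ℝ) : 0 ≤ F ℓ w ∧ F ℓ w ≤ 1 := by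
  unfold F
  split_ifs with h1 h2 h3
  · norm_num
  · norm_num
  · norm_num
  · push_neg at h1 h2
    have hw1 : |w| ≤ 1 := abs_le.2 ⟨h1.le, h2.le⟩
    have h4 := SS_nonneg ℓ w hw1
    have h5 := mul_SS_le_one ℓ h3 hw1
    rcases abs_cases w with ⟨he, _⟩ | ⟨he, _⟩ <;> constructor <;> nlinarith

lemma F_symm (ℓ : ℕ) (w : ℝ) : F ℓ (-w) = 1 - F ℓ w := by
  rcases le_or_gt w (-1) with h | h
  · rw [F_of_le_neg_one h, F_of_one_le (by linarith : (1:ℝ) ≤ -w)]; ring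
  rcases le_or_gt 1 w with h' | h'
  · rw [F_of_one_le h', F_of_le_neg_one (by linarith : -w ≤ -1)]; ring
  rcases eq_or_ne w 0 with h0 | h0
  · subst h0; rw [neg_zero, F_zero]; norm_num
  · have hne : -w ≠ 0 := neg_ne_zero.2 h0
    have hA : F ℓ w = 1/2 + w/2 * SS ℓ w := by
      unfold F; rw [if_neg (by linarith), if_neg (by linarith), if_neg h0]
    have hB : F ℓ (-w) = 1/2 + (-w)/2 * SS ℓ (-w) := by
      unfold F; rw [if_neg (by linarith : ¬ (-w ≤ -1)), if_neg (by linarith : ¬ (1:ℝ) ≤ -w), if_neg hne]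
    rw [hA, hB, SS_neg]; ring

lemma F_val (ℓ : ℕ) (hℓ : 1 ≤ ℓ) (w : ℝ) (h0 : 0 < |w|) (h1 : |w| ≤ 1) :
    F ℓ w = 1/2 + w/2 * SS ℓ w := by
  have hw0 : w ≠ 0 := abs_pos.1 h0
  have hrange := abs_le.1 h1
  unfold F
  split_ifs with hA hB
  · have hw : w = -1 := le_antisymm hA hrange.1
    subst hw
    rw [SS_one_abs ℓ hℓ (by norm_num)]
    norm_num
  · have hw : w = 1 := le_antisymm hrange.2 hB
    subst hw
    rw [SS_one_abs ℓ hℓ (by norm_num)]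
    norm_num
  · rfl

lemma SS_measurable (ℓ : ℕ) : Measurable (SS ℓ) := by
  unfold SS
  exact Finset.measurable_sum _ fun j _ =>
    ((Real.measurable_log.comp (measurable_const.div continuous_abs.measurable)).pow_const j).div_const _

lemma F_measurable (ℓ : ℕ) : Measurable (F ℓ) := by
  unfold F
  refine Measurable.ite measurableSet_Iic measurable_const ?_
  refine Measurable.ite measurableSet_Ici measurable_const ?_
  refine Measurable.ite (measurableSet_eq) measurable_const ?_
  exact measurable_const.add ((measurable_id.div_const 2).mul (SS_measurable ℓ))

def prodFun (ℓ : ℕ) : (Fin ℓ → ℝ) → ℝ := fun x => ∏ j, x j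

lemma prodFun_measurable (ℓ : ℕ) : Measurable (prodFun ℓ) :=
  Finset.measurable_prod _ fun j _ => measurable_pi_apply j

def ν (ℓ : ℕ) : Measure ℝ := (Measure.pi fun _ : Fin ℓ => unif).map (prodFun ℓ)

instance (ℓ : ℕ) : IsProbabilityMeasure (ν ℓ) :=
  Measure.isProbabilityMeasure_map (prodFun_measurable ℓ).aemeasurable

lemma ν_one : ν 1 = unif := by
  have h := measurePreserving_funUnique (β := ℝ) unif (Fin 1)
  have he : prodFun 1 = ⇑(MeasurableEquiv.funUnique (Fin 1) ℝ) := by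
    funext x
    rw [prodFun, Fin.prod_univ_one]
    rfl
  rw [ν, he]; exact h.map_eq

lemma ν_succ (ℓ : ℕ) : ν (ℓ + 1) = (unif.prod (ν ℓ)).map (fun p : ℝ × ℝ => p.1 * p.2) := by
  have h0 := measurePreserving_piFinSuccAbove (fun _ : Fin (ℓ+1) => unif) 0
  have h1 : prodFun (ℓ+1) = (fun p : ℝ × (Fin ℓ → ℝ) => p.1 * prodFun ℓ p.2) ∘
      ⇑(MeasurableEquiv.piFinSuccAbove (fun _ : Fin (ℓ+1) => ℝ) 0) := by
    funext x
    simpa [prodFun, MeasurableEquiv.piFinSuccAbove, Fin.tail] using Fin.prod_univ_succAbove x 0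
  have hg : Measurable (fun p : ℝ × (Fin ℓ → ℝ) => p.1 * prodFun ℓ p.2) :=
    measurable_fst.mul ((prodFun_measurable ℓ).comp measurable_snd)
  rw [ν, h1, ← Measure.map_map hg (MeasurableEquiv.measurable _), h0.map_eq]
  have h2 : (fun p : ℝ × (Fin ℓ → ℝ) => p.1 * prodFun ℓ p.2) =
      (fun p : ℝ × ℝ => p.1 * p.2) ∘ (Prod.map id (prodFun ℓ)) := rfl
  rw [h2, ← Measure.map_map (measurable_mul : Measurable fun p : ℝ × ℝ => p.1 * p.2)
    (measurable_id.prodMap (prodFun_measurable ℓ)),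
    ← Measure.map_prod_map _ _ measurable_id (prodFun_measurable ℓ), Measure.map_id]
  rfl

lemma ν_succ_apply (ℓ : ℕ) {s : Set ℝ} (hs : MeasurableSet s) :
    ν (ℓ+1) s = ∫⁻ x, ν ℓ {t | x * t ∈ s} ∂unif := by
  rw [ν_succ, Measure.map_apply (measurable_mul : Measurable fun p : ℝ × ℝ => p.1 * p.2) hs,
    Measure.prod_apply ((measurable_mul : Measurable fun p : ℝ × ℝ => p.1 * p.2) hs)]
  rfl

lemma ν_singleton : ∀ ℓ, 1 ≤ ℓ → ∀ t : ℝ, ν ℓ {t} = 0 := by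
  intro ℓ hℓ
  induction ℓ, hℓ using Nat.le_induction with
  | base =>
    intro t
    rw [ν_one]; exact unif_singleton t
  | succ ℓ hℓ ih =>
    intro t
    rw [ν_succ_apply ℓ (measurableSet_singleton t)]
    have hae : (fun x => ν ℓ {s | x * s ∈ ({t} : Set ℝ)}) =ᵐ[unif] fun _ => 0 := by
      filter_upwards [unif_ae_ne_zero] with x hx
      have hset : {s : ℝ | x * s ∈ ({t} : Set ℝ)} = {t / x} := by
        ext s
        simp only [Set.mem_setOf_eq, Set.mem_singleton_iff]
        rw [mul_comm, ← eq_div_iff hx]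
      rw [hset]
      exact ih (t / x)
    rw [lintegral_congr_ae hae, lintegral_zero]

lemma key_integral (ℓ : ℕ) (hℓ : 1 ≤ ℓ) (z : ℝ) :
    (∫ x in (0:ℝ)..1, F ℓ (z / x)) = F (ℓ+1) z := by
  rcases le_or_gt 1 z with hz1 | hz1
  · rw [F_of_one_le hz1, intervalIntegral.integral_of_le zero_le_one,
      setIntegral_congr_fun measurableSet_Ioc (g := fun _ => (1:ℝ))
        (fun x hx => F_of_one_le ((one_le_div hx.1).2 (le_trans hx.2 hz1))),
      setIntegral_const]
    simp [Real.volume_Ioc]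
  rcases le_or_gt z (-1) with hz2 | hz2
  · rw [F_of_le_neg_one hz2, intervalIntegral.integral_of_le zero_le_one,
      setIntegral_congr_fun measurableSet_Ioc (g := fun _ => (0:ℝ))
        (fun x hx => F_of_le_neg_one (by rw [div_le_iff₀ hx.1]; nlinarith [hx.1, hx.2])),
      setIntegral_const]
    simp
  rcases eq_or_ne z 0 with hz0 | hz0
  · subst hz0
    rw [F_zero, intervalIntegral.integral_of_le zero_le_one,
      setIntegral_congr_fun measurableSet_Ioc (g := fun _ => (1/2:ℝ))
        (fun x hx => by rw [zero_div]; exact F_zero ℓ),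
      setIntegral_const]
    simp [Real.volume_Ioc]
  -- main case : 0 < |z| < 1
  have ha0 : 0 < |z| := abs_pos.2 hz0
  have ha1 : |z| < 1 := abs_lt.2 ⟨hz2, hz1⟩
  set a := |z| with ha
  set c : ℝ := if 0 < z then 1 else 0 with hc
  have heq1 : Set.EqOn (fun x => F ℓ (z / x)) (fun _ => c) (Set.Ioc 0 a) := by
    intro x hx
    rcases lt_or_gt_of_ne hz0 with hzneg | hzpos
    · have haz : a = -z := by rw [ha]; exact abs_of_neg hzneg
      simp only [hc, if_neg (not_lt.2 hzneg.le)]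
      refine F_of_le_neg_one ?_
      rw [div_le_iff₀ hx.1]
      have h2 := hx.2
      rw [haz] at h2
      linarith
    · have haz : a = z := by rw [ha]; exact abs_of_pos hzpos
      simp only [hc, if_pos hzpos]
      refine F_of_one_le ((one_le_div hx.1).2 ?_)
      have h2 := hx.2
      rw [haz] at h2
      exact h2
  have step1 : (∫ x in (0:ℝ)..a, F ℓ (z / x)) = c * a := by
    rw [intervalIntegral.integral_of_le ha0.le,
      setIntegral_congr_fun measurableSet_Ioc heq1, setIntegral_const,
      Real.volume_real_Ioc_of_le ha0.le, sub_zero, smul_eq_mul, mul_comm]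
  set L := -Real.log a with hL
  set φ : ℝ → ℝ := fun x => 1/2 + z/(2*x) *
    ∑ j ∈ Finset.range ℓ, (Real.log x - Real.log a)^j / (Nat.factorial j) with hφ
  have heq2 : Set.EqOn (fun x => F ℓ (z / x)) φ (Set.Icc a 1) := by
    intro x hx
    have hx0 : 0 < x := lt_of_lt_of_le ha0 hx.1
    have habs : |z / x| = a / x := by rw [abs_div, abs_of_pos hx0, ha]
    have h01 : 0 < |z / x| := by rw [habs]; positivity
    have h11 : |z / x| ≤ 1 := by rw [habs]; exact (div_le_one hx0).2 hx.1
    simp only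
    rw [F_val ℓ hℓ _ h01 h11]
    unfold SS
    rw [habs, one_div_div, Real.log_div hx0.ne' ha0.ne', hφ]
    ring
  have step2 : (∫ x in a..1, F ℓ (z / x)) = ∫ x in a..1, φ x := by
    refine intervalIntegral.integral_congr ?_
    rw [Set.uIcc_of_le ha1.le]
    exact heq2
  set Φ : ℝ → ℝ := fun x => x/2 + z/2 *
    ∑ j ∈ Finset.range ℓ, (Real.log x - Real.log a)^(j+1) / (Nat.factorial (j+1)) with hΦ
  have hderiv : ∀ x ∈ Set.uIcc a 1, HasDerivAt Φ (φ x) x := by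
    intro x hx
    rw [Set.uIcc_of_le ha1.le] at hx
    have hx0 : 0 < x := lt_of_lt_of_le ha0 hx.1
    have h1 : HasDerivAt (fun y : ℝ => y/2) (1/2) x := (hasDerivAt_id x).div_const 2
    have hsum : HasDerivAt (fun y : ℝ => ∑ j ∈ Finset.range ℓ,
        (Real.log y - Real.log a)^(j+1) / (Nat.factorial (j+1)))
        (∑ j ∈ Finset.range ℓ,
          (((j:ℝ)+1) * (Real.log x - Real.log a)^j * x⁻¹) / (Nat.factorial (j+1))) x := by
      refine HasDerivAt.fun_sum fun j _ => ?_
      have hlog : HasDerivAt (fun y : ℝ => Real.log y - Real.log a) x⁻¹ x :=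
        (Real.hasDerivAt_log hx0.ne').sub_const _
      have h2 := (hlog.pow (j+1)).div_const (Nat.factorial (j+1) : ℝ)
      simpa using h2
    have hcomb := h1.add (hsum.const_mul (z/2))
    have hval : 1/2 + z/2 * (∑ j ∈ Finset.range ℓ,
        (((j:ℝ)+1) * (Real.log x - Real.log a)^j * x⁻¹) / (Nat.factorial (j+1))) = φ x := by
      rw [hφ]
      have hterm : ∀ j ∈ Finset.range ℓ,
          (((j:ℝ)+1) * (Real.log x - Real.log a)^j * x⁻¹) / (Nat.factorial (j+1))
          = x⁻¹ * ((Real.log x - Real.log a)^j / (Nat.factorial j)) := by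
        intro j _
        have hfact : (Nat.factorial (j+1) : ℝ) = ((j:ℝ)+1) * (Nat.factorial j : ℝ) := by
          rw [Nat.factorial_succ]; push_cast; ring
        rw [hfact]
        have hjn : ((j:ℝ)+1) ≠ 0 := by positivity
        have hfn : (Nat.factorial j : ℝ) ≠ 0 := by
          exact_mod_cast Nat.factorial_ne_zero j
        field_simp
      rw [Finset.sum_congr rfl hterm, ← Finset.mul_sum]
      field_simp
    rw [← hval]
    exact hcomb
  have hφcont : ContinuousOn φ (Set.uIcc a 1) := by
    rw [Set.uIcc_of_le ha1.le]
    have hne : ∀ x ∈ Set.Icc a 1, x ≠ 0 := fun x hx => (lt_of_lt_of_le ha0 hx.1).ne'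
    refine continuousOn_const.add (ContinuousOn.mul ?_ ?_)
    · exact continuousOn_const.div ((continuous_const.mul continuous_id).continuousOn)
        (fun x hx => by have := hne x hx; positivity)
    · refine continuousOn_finset_sum _ fun j _ => ?_
      refine ContinuousOn.div_const ?_ _
      refine ContinuousOn.pow ?_ j
      exact ContinuousOn.sub (Real.continuousOn_log.mono (fun x hx => hne x hx)) continuousOn_const
  have hint2 : IntervalIntegrable φ volume a 1 := hφcont.intervalIntegrable
  have step3 : (∫ x in a..1, φ x) = (1 - a)/2 + z/2 *
      ∑ j ∈ Finset.range ℓ, L^(j+1) / (Nat.factorial (j+1)) := by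
    rw [intervalIntegral.integral_eq_sub_of_hasDerivAt hderiv hint2, hΦ]
    simp only [Real.log_one]
    have hzero : ∑ j ∈ Finset.range ℓ,
        (Real.log a - Real.log a)^(j+1) / (Nat.factorial (j+1) : ℝ) = 0 :=
      Finset.sum_eq_zero fun j _ => by
        rw [sub_self, zero_pow (Nat.succ_ne_zero j), zero_div]
    rw [hzero, hL]
    simp only [zero_sub]
    ring
  have hint1 : IntervalIntegrable (fun x => F ℓ (z/x)) volume 0 a := by
    rw [intervalIntegrable_iff_integrableOn_Ioc_of_le ha0.le]
    have hconst : IntegrableOn (fun _ => c) (Set.Ioc (0:ℝ) a) volume :=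
      integrableOn_const measure_Ioc_lt_top.ne
    exact (integrableOn_congr_fun heq1 measurableSet_Ioc).2 hconst
  have hint2' : IntervalIntegrable (fun x => F ℓ (z/x)) volume a 1 := by
    rw [intervalIntegrable_iff_integrableOn_Ioc_of_le ha1.le]
    have hφcont' : ContinuousOn φ (Set.Icc a 1) := by
      rw [Set.uIcc_of_le ha1.le] at hφcont; exact hφcont
    have hφint : IntegrableOn φ (Set.Ioc a 1) volume :=
      (hφcont'.integrableOn_Icc).mono_set Set.Ioc_subset_Icc_self
    exact (integrableOn_congr_fun (heq2.mono Set.Ioc_subset_Icc_self) measurableSet_Ioc).2 hφint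
  have hsplit := intervalIntegral.integral_add_adjacent_intervals hint1 hint2'
  rw [← hsplit, step1, step2, step3,
    F_val (ℓ+1) (by omega) z ha0 ha1.le]
  unfold SS
  rw [← ha]
  have hlog1a : Real.log (1/a) = L := by rw [one_div, Real.log_inv, hL]
  rw [hlog1a, Finset.sum_range_succ']
  simp only [pow_zero, Nat.factorial_zero, Nat.cast_one]
  rcases lt_or_gt_of_ne hz0 with hzneg | hzpos
  · have haz : a = -z := by rw [ha]; exact abs_of_neg hzneg
    rw [hc, if_neg (not_lt.2 hzneg.le), haz]
    ring
  · have haz : a = z := by rw [ha]; exact abs_of_pos hzpos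
    rw [hc, if_pos hzpos, haz]
    ring

lemma ν_Iic : ∀ ℓ, 1 ≤ ℓ → ∀ z : ℝ, ν ℓ (Set.Iic z) = ENNReal.ofReal (F ℓ z) := by
  intro ℓ hℓ
  induction ℓ, hℓ using Nat.le_induction with
  | base =>
    intro z
    rw [ν_one]
    have happ : unif (Set.Iic z) = 2⁻¹ * volume (Set.Iic z ∩ Set.Icc (-1:ℝ) 1) := by
      simp [unif, Measure.restrict_apply measurableSet_Iic]
    have hset : Set.Iic z ∩ Set.Icc (-1:ℝ) 1 = Set.Icc (-1) (min z 1) := by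
      ext x
      simp only [Set.mem_inter_iff, Set.mem_Iic, Set.mem_Icc, le_min_iff]
      tauto
    rw [happ, hset, Real.volume_Icc]
    rcases le_or_gt z (-1) with h1 | h1
    · rw [F_of_le_neg_one h1, ENNReal.ofReal_zero]
      rw [min_eq_left (by linarith), ENNReal.ofReal_of_nonpos (by linarith), mul_zero]
    rcases le_or_gt 1 z with h2 | h2
    · rw [F_of_one_le h2, min_eq_right (by linarith), ENNReal.ofReal_one]
      norm_num
      exact ENNReal.inv_mul_cancel (by norm_num) (by norm_num)
    · have hF : F 1 z = (z + 1)/2 := by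
        rcases eq_or_ne z 0 with h0 | h0
        · rw [h0, F_zero]; norm_num
        · rw [F_val 1 le_rfl z (abs_pos.2 h0) (abs_le.2 ⟨h1.le, h2.le⟩)]
          have : SS 1 z = 1 := by simp [SS]
          rw [this]; ring
      rw [hF, min_eq_left h2.le]
      rw [show z - (-1) = z + 1 by ring]
      rw [ENNReal.ofReal_div_of_pos (by norm_num), ENNReal.ofReal_ofNat]
      rw [ENNReal.div_eq_inv_mul]
  | succ ℓ hℓ ih =>
    intro z
    rw [ν_succ_apply ℓ measurableSet_Iic]
    set h : ℝ → ℝ := fun x => if 0 < x then F ℓ (z/x) else F ℓ (-(z/x)) with hh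
    have hae : (fun x => ν ℓ {t | x * t ∈ Set.Iic z}) =ᵐ[unif]
        fun x => ENNReal.ofReal (h x) := by
      filter_upwards [unif_ae_ne_zero] with x hx
      rcases hx.lt_or_gt with hneg | hpos
      · have hset : {t : ℝ | x * t ∈ Set.Iic z} = Set.Ici (z/x) := by
          ext t
          simp only [Set.mem_setOf_eq, Set.mem_Iic, Set.mem_Ici]
          rw [div_le_iff_of_neg hneg, mul_comm]
        have hIci : ν ℓ (Set.Ici (z/x)) = 1 - ν ℓ (Set.Iio (z/x)) := by
          rw [← Set.compl_Iio, measure_compl measurableSet_Iio (measure_ne_top _ _), measure_univ]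
        have hIio : ν ℓ (Set.Iio (z/x)) = ν ℓ (Set.Iic (z/x)) := by
          rw [← Set.Iio_union_right, measure_union (by simp) (measurableSet_singleton _),
            ν_singleton ℓ hℓ, add_zero]
        rw [hset, hIci, hIio, ih, hh]
        simp only [if_neg (not_lt.2 hneg.le)]
        rw [F_symm, ENNReal.ofReal_sub 1 (F_mem ℓ (z/x)).1, ENNReal.ofReal_one]
      · have hset : {t : ℝ | x * t ∈ Set.Iic z} = Set.Iic (z/x) := by
          ext t
          simp only [Set.mem_setOf_eq, Set.mem_Iic]
          rw [le_div_iff₀ hpos, mul_comm]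
        rw [hset, ih, hh]
        simp only [if_pos hpos]
    rw [lintegral_congr_ae hae]
    have hmeas_h : Measurable h := by
      rw [hh]
      exact Measurable.ite measurableSet_Ioi
        ((F_measurable ℓ).comp (measurable_const.div measurable_id))
        ((F_measurable ℓ).comp (measurable_const.div measurable_id).neg)
    have h_nonneg : ∀ x, 0 ≤ h x := by
      intro x
      simp only [hh]
      split_ifs
      · exact (F_mem ℓ _).1
      · exact (F_mem ℓ _).1
    have h_int : Integrable h unif := by
      refine Integrable.mono' (integrable_const 1) hmeas_h.aestronglyMeasurable ?_
      refine Filter.Eventually.of_forall fun x => ?_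
      rw [Real.norm_eq_abs, abs_le]
      constructor
      · linarith [h_nonneg x]
      · simp only [hh]; split_ifs
        · exact (F_mem ℓ _).2
        · exact (F_mem ℓ _).2
    rw [← ofReal_integral_eq_lintegral_ofReal h_int
      (Filter.Eventually.of_forall h_nonneg)]
    congr 1
    -- real computation
    have hvint : ∀ u v : ℝ, IntervalIntegrable h volume u v := by
      intro u v
      rw [intervalIntegrable_iff]
      refine Integrable.mono' (g := fun _ => (1:ℝ)) ?_ hmeas_h.aestronglyMeasurable.restrict ?_
      · refine integrableOn_const ?_
        rw [Set.uIoc]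
        exact measure_Ioc_lt_top.ne
      refine Filter.Eventually.of_forall fun x => ?_
      show ‖h x‖ ≤ (1:ℝ)
      rw [Real.norm_eq_abs, abs_le]
      constructor
      · linarith [h_nonneg x]
      · simp only [hh]; split_ifs
        · exact (F_mem ℓ _).2
        · exact (F_mem ℓ _).2
    have hInt : ∫ x, h x ∂unif = 2⁻¹ * ∫ x in (-1:ℝ)..1, h x := by
      rw [unif, integral_smul_measure]
      rw [intervalIntegral.integral_of_le (by norm_num : (-1:ℝ) ≤ 1)]
      rw [← integral_Icc_eq_integral_Ioc]
      simp
    have hsplit : (∫ x in (-1:ℝ)..1, h x) =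
        (∫ x in (-1:ℝ)..0, h x) + ∫ x in (0:ℝ)..1, h x :=
      (intervalIntegral.integral_add_adjacent_intervals (hvint _ _) (hvint _ _)).symm
    have hpos_part : (∫ x in (0:ℝ)..1, h x) = ∫ x in (0:ℝ)..1, F ℓ (z/x) := by
      rw [intervalIntegral.integral_of_le zero_le_one,
        intervalIntegral.integral_of_le zero_le_one]
      refine setIntegral_congr_fun measurableSet_Ioc fun x hx => ?_
      rw [hh]
      simp only [if_pos hx.1]
    have hneg_part : (∫ x in (-1:ℝ)..0, h x) = ∫ x in (0:ℝ)..1, F ℓ (z/x) := by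
      have hcomp : (∫ x in (0:ℝ)..1, h (-x)) = ∫ x in (-1:ℝ)..0, h x := by
        simpa using intervalIntegral.integral_comp_neg (a := (0:ℝ)) (b := 1) h
      rw [← hcomp, intervalIntegral.integral_of_le zero_le_one,
        intervalIntegral.integral_of_le zero_le_one]
      refine setIntegral_congr_fun measurableSet_Ioc fun x hx => ?_
      rw [hh]
      simp only [if_neg (not_lt.2 (by linarith [hx.1] : -x ≤ 0))]
      rw [div_neg, neg_neg]
    rw [hInt, hsplit, hpos_part, hneg_part, key_integral ℓ hℓ z]
    ring

lemma map_pi {Ω : Type} [MeasureSpace Ω] (hP : IsProbabilityMeasure (ℙ : Measure Ω))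
    {ℓ : ℕ} (X : Fin ℓ → Ω → ℝ)
    (hmeas : ∀ j, Measurable (X j))
    (hindep : iIndepFun X ℙ)
    (hunif : ∀ j, Measure.map (X j) ℙ = unif) :
    Measure.map (fun ω (j : Fin ℓ) => X j ω) ℙ = Measure.pi (fun _ : Fin ℓ => unif) := by
  haveI := hP
  have hXX : Measurable (fun ω (j : Fin ℓ) => X j ω) := measurable_pi_lambda _ fun j => hmeas j
  refine (Measure.pi_eq fun s hs => ?_).symm
  rw [Measure.map_apply hXX (MeasurableSet.univ_pi hs)]
  have hpre : (fun ω (j : Fin ℓ) => X j ω) ⁻¹' Set.pi Set.univ s = ⋂ j, X j ⁻¹' s j := by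
    ext ω
    simp [Set.mem_pi]
  rw [hpre]
  have hind := (ProbabilityTheory.iIndepFun_iff_measure_inter_preimage_eq_mul.1 hindep)
    Finset.univ (fun i _ => hs i)
  have hbi : (⋂ j ∈ Finset.univ, X j ⁻¹' s j) = ⋂ j, X j ⁻¹' s j := by
    simp
  rw [hbi] at hind
  rw [hind]
  refine Finset.prod_congr rfl fun j _ => ?_
  rw [← hunif j, Measure.map_apply (hmeas j) (hs j)]

end Stmt14

theorem stmt14
    (ℓ : ℕ) (hℓ : 1 ≤ ℓ)
    (Ω : Type) [MeasureSpace Ω] (hP : IsProbabilityMeasure (ℙ : Measure Ω))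
    (X : Fin ℓ → Ω → ℝ)
    (hmeas : ∀ j, Measurable (X j))
    (hindep : iIndepFun X ℙ)
    -- each `X j` is uniformly distributed on `[-1, 1]`
    (hunif : ∀ j, Measure.map (X j) ℙ =
      ((2 : ENNReal))⁻¹ • volume.restrict (Set.Icc (-1 : ℝ) 1)) :
    ∀ z : ℝ, 0 < |z| → |z| ≤ 1 →
      (ℙ {ω | ∏ j, X j ω ≤ z}).toReal =
        1 / 2 + z / 2 * ∑ j ∈ Finset.range ℓ,
          Real.log (1 / |z|) ^ j / Nat.factorial j := by
  haveI := hP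
  intro z hz0 hz1
  have hprod_meas : Measurable (fun ω => ∏ j, X j ω) :=
    Finset.measurable_prod _ fun j _ => hmeas j
  have hXX : Measurable (fun ω (j : Fin ℓ) => X j ω) := measurable_pi_lambda _ fun j => hmeas j
  have hmap := Stmt14.map_pi hP X hmeas hindep hunif
  have hlaw : ℙ {ω | ∏ j, X j ω ≤ z} = Stmt14.ν ℓ (Set.Iic z) := by
    have hset : {ω | ∏ j, X j ω ≤ z} = (fun ω => ∏ j, X j ω) ⁻¹' Set.Iic z := rfl
    rw [hset, ← Measure.map_apply hprod_meas measurableSet_Iic]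
    have hcomp : (fun ω => ∏ j, X j ω) = Stmt14.prodFun ℓ ∘ (fun ω (j : Fin ℓ) => X j ω) := rfl
    rw [hcomp, ← Measure.map_map (Stmt14.prodFun_measurable ℓ) hXX, hmap]
    rfl
  rw [hlaw, Stmt14.ν_Iic ℓ hℓ z, ENNReal.toReal_ofReal (Stmt14.F_mem ℓ z).1,
    Stmt14.F_val ℓ hℓ z hz0 hz1]
  rfl
end
end
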